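/- arXiv:1608.07569 — 5 statements merged into one kernel-verified Lean document; each statement's English description precedes it below -/
import Mathlib

section
/- Let 1 ≤ k ≤ n, let X_n be a subspace of (ℂ^d)^{⊗n} of dimension d_{X_n} and Y_k a subspace of (ℂ^d)^{⊗k} of dimension d_{Y_k}, with orthogonal projections Π_{X_n}, Π_{Y_k} and maximally mixed states π_{X_n} := Π_{X_n}/d_{X_n}, π_{Y_k} := Π_{Y_k}/d_{Y_k}. Define C_{k→n}(ω) := (d_{Y_k}/d_{X_n})·Π_{X_n}(Π_{Y_k} ω Π_{Y_k} ⊗ I^{⊗(n−k)})Π_{X_n} and P_{n→k}(ω) := Π_{Y_k} tr_{n−k}[Π_{X_n} ω Π_{X_n}] Π_{Y_k}. Let ω be a state on (ℂ^d)^{⊗n} whose support is contained in X_n and such that the partial trace tr_{n−k}[ω] over the last n−k factors is supported in Y_k. Then D(ω‖π_{X_n}) ≥ D(P_{n→k}(ω)‖π_{Y_k}) + D(ω‖(C_{k→n}∘P_{n→k})(ω)). -/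
open scoped BigOperators Matrix Kronecker ComplexOrder
open Matrix

noncomputable section

variable {ι : Type*} [Fintype ι] [DecidableEq ι]

/-- Apply a real-scalar function to a Hermitian matrix via the spectral decomposition
(junk value `0` on non-Hermitian matrices). -/
def hermFun (f : ℝ → ℂ) (A : Matrix ι ι ℂ) : Matrix ι ι ℂ :=
  if hA : A.IsHermitian then
    (hA.eigenvectorUnitary : Matrix ι ι ℂ) * Matrix.diagonal (fun i => f (hA.eigenvalues i)) *
      (star (hA.eigenvectorUnitary : Matrix ι ι ℂ))
  else 0

/-- Matrix logarithm (on the support; natural logarithm). -/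
def matLog (A : Matrix ι ι ℂ) : Matrix ι ι ℂ := hermFun (fun x => (Real.log x : ℂ)) A

/-- Matrix square root of a Hermitian (e.g. positive semidefinite) matrix. -/
def matSqrt (A : Matrix ι ι ℂ) : Matrix ι ι ℂ := hermFun (fun x => (Real.sqrt x : ℂ)) A

/-- Complex matrix power with the Moore–Penrose convention (inverse powers taken on the support). -/
def matCPow (A : Matrix ι ι ℂ) (z : ℂ) : Matrix ι ι ℂ :=
  hermFun (fun x => if x = 0 then 0 else (x : ℂ) ^ z) A

/-- A state (density operator). -/
def IsState (ρ : Matrix ι ι ℂ) : Prop := ρ.PosSemidef ∧ ρ.trace = 1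

/-- Quantum relative entropy `D(ρ‖σ) = tr[ρ (log ρ - log σ)]`. -/
def relEnt (ρ σ : Matrix ι ι ℂ) : ℝ := ((ρ * (matLog ρ - matLog σ)).trace).re

/-- von Neumann entropy `H(ρ) = -tr[ρ log ρ]`. -/
def vnEntropy (ρ : Matrix ι ι ℂ) : ℝ := -((ρ * matLog ρ).trace).re

/-- Trace norm `‖X‖₁ = tr √(X† X)`. -/
def traceNorm (X : Matrix ι ι ℂ) : ℝ := ((matSqrt (Xᴴ * X)).trace).re

/-- Fidelity `F(ρ,σ) = ‖√ρ √σ‖₁²`. -/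
def fidelity (ρ σ : Matrix ι ι ℂ) : ℝ := (traceNorm (matSqrt ρ * matSqrt σ)) ^ 2

variable {A B : Type*} [Fintype A] [DecidableEq A] [Fintype B] [DecidableEq B]

/-- The extension `Λ ⊗ id_m` of a map on matrices. -/
def extendChan (Λ : Matrix A A ℂ →ₗ[ℂ] Matrix B B ℂ) {m : Type*} [Fintype m]
    (M : Matrix (A × m) (A × m) ℂ) : Matrix (B × m) (B × m) ℂ :=
  fun p q => Λ (fun a a' => M (a, p.2) (a', q.2)) p.1 q.1

/-- A quantum channel: a completely positive trace-preserving linear map. -/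
structure IsQChannel (Λ : Matrix A A ℂ →ₗ[ℂ] Matrix B B ℂ) : Prop where
  tp : ∀ M, (Λ M).trace = M.trace
  cp : ∀ (m : ℕ) (M : Matrix (A × Fin m) (A × Fin m) ℂ), M.PosSemidef →
    (extendChan Λ M).PosSemidef

/-- The marginal of a state of `n` systems on the `j`-th system. -/
def marginal {n : ℕ} (ρ : Matrix (Fin n → ι) (Fin n → ι) ℂ) (j : Fin n) :
    Matrix ι ι ℂ :=
  fun a b => ∑ f : {i : Fin n // i ≠ j} → ι,
      ρ (fun i => if h : i = j then a else f ⟨i, h⟩)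
        (fun i => if h : i = j then b else f ⟨i, h⟩)

/-- `n`-fold tensor power of a matrix. -/
def tpow (σ : Matrix ι ι ℂ) (n : ℕ) : Matrix (Fin n → ι) (Fin n → ι) ℂ :=
  fun f g => ∏ i, σ (f i) (g i)

/-- Partial trace over the last `n - k` tensor factors. -/
def ptraceLast {n k : ℕ} (h : k ≤ n) (ρ : Matrix (Fin n → ι) (Fin n → ι) ℂ) :
    Matrix (Fin k → ι) (Fin k → ι) ℂ :=
  fun a b => ∑ z : Fin (n - k) → ι,
    ρ (fun i => if h' : (i : ℕ) < k then a ⟨i, h'⟩ else z ⟨(i : ℕ) - k, by have := i.isLt; omega⟩)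
      (fun i => if h' : (i : ℕ) < k then b ⟨i, h'⟩ else z ⟨(i : ℕ) - k, by have := i.isLt; omega⟩)

/-- Permutation matrix acting on `(ℂ^d)^{⊗ n}`. -/
def permMat (d n : ℕ) (π : Equiv.Perm (Fin n)) :
    Matrix (Fin n → Fin d) (Fin n → Fin d) ℂ :=
  fun f g => if g = f ∘ π then 1 else 0

/-- Orthogonal projection onto the symmetric subspace of `(ℂ^d)^{⊗ n}`. -/
def symProj (d n : ℕ) : Matrix (Fin n → Fin d) (Fin n → Fin d) ℂ :=
  ((n.factorial : ℂ))⁻¹ • ∑ π : Equiv.Perm (Fin n), permMat d n π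

/-- Dimension `d[n] = C(d+n-1, n)` of the symmetric subspace. -/
def dsym (d n : ℕ) : ℕ := (d + n - 1).choose n

/-- Maximally mixed state on the symmetric subspace. -/
def piSym (d n : ℕ) : Matrix (Fin n → Fin d) (Fin n → Fin d) ℂ :=
  ((dsym d n : ℂ))⁻¹ • symProj d n

/-- Tensoring a matrix on the first `k` factors with the identity on the last `n-k` factors. -/
def extendId {d k n : ℕ} (h : k ≤ n) (M : Matrix (Fin k → Fin d) (Fin k → Fin d) ℂ) :
    Matrix (Fin n → Fin d) (Fin n → Fin d) ℂ :=
  fun f g => (if ∀ i : Fin n, k ≤ (i : ℕ) → f i = g i then 1 else 0) *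
    M (fun i => f (Fin.castLE h i)) (fun i => g (Fin.castLE h i))

/-- The universal quantum cloning machine `C_{k→n}`. -/
def uqcm (d : ℕ) {k n : ℕ} (h : k ≤ n) (ω : Matrix (Fin k → Fin d) (Fin k → Fin d) ℂ) :
    Matrix (Fin n → Fin d) (Fin n → Fin d) ℂ :=
  (((dsym d k : ℂ)) / ((dsym d n : ℂ))) •
    (symProj d n * extendId h (symProj d k * ω * symProj d k) * symProj d n)

/-- The symmetrized partial trace channel `P_{n→k}`. -/
def symPTrace (d : ℕ) {k n : ℕ} (h : k ≤ n) (ω : Matrix (Fin n → Fin d) (Fin n → Fin d) ℂ) :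
    Matrix (Fin k → Fin d) (Fin k → Fin d) ℂ :=
  symProj d k * ptraceLast h (symProj d n * ω * symProj d n) * symProj d k

/-- Orthogonal projection onto the antisymmetric subspace of `(ℂ^d)^{⊗ n}`. -/
def antiProj (d n : ℕ) : Matrix (Fin n → Fin d) (Fin n → Fin d) ℂ :=
  ((n.factorial : ℂ))⁻¹ • ∑ π : Equiv.Perm (Fin n), ((Equiv.Perm.sign π : ℤ) : ℂ) • permMat d n π

/-- Maximally mixed state on the antisymmetric subspace. -/
def piAnti (d n : ℕ) : Matrix (Fin n → Fin d) (Fin n → Fin d) ℂ :=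
  ((d.choose n : ℂ))⁻¹ • antiProj d n

/-- The antisymmetric cloning machine. -/
def antiClone (d : ℕ) {k n : ℕ} (h : k ≤ n) (ω : Matrix (Fin k → Fin d) (Fin k → Fin d) ℂ) :
    Matrix (Fin n → Fin d) (Fin n → Fin d) ℂ :=
  (((d.choose k : ℂ)) / ((d.choose n : ℂ))) •
    (antiProj d n * extendId h (antiProj d k * ω * antiProj d k) * antiProj d n)

/-- The antisymmetrized partial trace. -/
def antiPTrace (d : ℕ) {k n : ℕ} (h : k ≤ n) (ω : Matrix (Fin n → Fin d) (Fin n → Fin d) ℂ) :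
    Matrix (Fin k → Fin d) (Fin k → Fin d) ℂ :=
  antiProj d k * ptraceLast h (antiProj d n * ω * antiProj d n) * antiProj d k

/-- Rank-one projection (outer product) `|v⟩⟨v|`. -/
def outer {α : Type*} (v : α → ℂ) : Matrix α α ℂ :=
  fun x y => v x * (starRingEnd ℂ) (v y)

/-- Slater determinant vector `φ₁ ∧ ⋯ ∧ φ_k`. -/
def slater {d k : ℕ} (w : Fin k → (Fin d → ℂ)) : (Fin k → Fin d) → ℂ :=
  fun f => ((Real.sqrt k.factorial : ℂ))⁻¹ *
    ∑ π : Equiv.Perm (Fin k), ((Equiv.Perm.sign π : ℤ) : ℂ) * ∏ i, w (π i) (f i)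

/-- Partial trace over the second tensor factor. -/
def trB {ιA ιB : Type*} [Fintype ιB] (ρ : Matrix (ιA × ιB) (ιA × ιB) ℂ) : Matrix ιA ιA ℂ :=
  fun a a' => ∑ b, ρ (a, b) (a', b)

/-- Partial trace over the first tensor factor. -/
def trA {ιA ιB : Type*} [Fintype ιA] (ρ : Matrix (ιA × ιB) (ιA × ιB) ℂ) : Matrix ιB ιB ℂ :=
  fun b b' => ∑ a, ρ (a, b) (a, b')

/-- The probability density `β(t) = (π/2)(1 + cosh(π t))⁻¹`. -/
def betaDens (t : ℝ) : ℝ := (Real.pi / 2) * (1 + Real.cosh (Real.pi * t))⁻¹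

/-- Rotated Petz recovery map `R^t_{A,X}`, mapping operators on `B` to operators on `A ⊗ B`. -/
def petzA {ιA ιB : Type*} [Fintype ιA] [DecidableEq ιA] [Fintype ιB] [DecidableEq ιB]
    (t : ℝ) (X : Matrix (ιA × ιB) (ιA × ιB) ℂ) (Y : Matrix ιB ιB ℂ) :
    Matrix (ιA × ιB) (ιA × ιB) ℂ :=
  matCPow X ((1 + t * Complex.I) / 2) *
    ((1 : Matrix ιA ιA ℂ) ⊗ₖ
      (matCPow (trA X) (-(1 + t * Complex.I) / 2) * Y * matCPow (trA X) (-(1 - t * Complex.I) / 2))) *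
    matCPow X ((1 - t * Complex.I) / 2)

/-- Rotated Petz recovery map `R^t_{B,X}`, mapping operators on `A` to operators on `A ⊗ B`. -/
def petzB {ιA ιB : Type*} [Fintype ιA] [DecidableEq ιA] [Fintype ιB] [DecidableEq ιB]
    (t : ℝ) (X : Matrix (ιA × ιB) (ιA × ιB) ℂ) (Y : Matrix ιA ιA ℂ) :
    Matrix (ιA × ιB) (ιA × ιB) ℂ :=
  matCPow X ((1 + t * Complex.I) / 2) *
    ((matCPow (trB X) (-(1 + t * Complex.I) / 2) * Y * matCPow (trB X) (-(1 - t * Complex.I) / 2)) ⊗ₖ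
      (1 : Matrix ιB ιB ℂ)) *
    matCPow X ((1 - t * Complex.I) / 2)

/-- Cloning map between two general subspaces, given by their orthogonal projections. -/
def genClone {d k n : ℕ} (h : k ≤ n) (dX dY : ℕ)
    (PX : Matrix (Fin n → Fin d) (Fin n → Fin d) ℂ)
    (PY : Matrix (Fin k → Fin d) (Fin k → Fin d) ℂ)
    (ω : Matrix (Fin k → Fin d) (Fin k → Fin d) ℂ) :
    Matrix (Fin n → Fin d) (Fin n → Fin d) ℂ :=
  (((dY : ℂ)) / ((dX : ℂ))) • (PX * extendId h (PY * ω * PY) * PX)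

/-- Partial trace channel between two general subspaces. -/
def genPTrace {d k n : ℕ} (h : k ≤ n)
    (PX : Matrix (Fin n → Fin d) (Fin n → Fin d) ℂ)
    (PY : Matrix (Fin k → Fin d) (Fin k → Fin d) ℂ)
    (ω : Matrix (Fin n → Fin d) (Fin n → Fin d) ℂ) :
    Matrix (Fin k → Fin d) (Fin k → Fin d) ℂ :=
  PY * ptraceLast h (PX * ω * PX) * PY

end

/-!
Write `ρ = tr_{n-k} ω`. The support hypotheses give `P_{n→k}(ω) = ρ` and
`C_{k→n}(ρ) = (d_Y / d_X) Π_X (ρ ⊗ 1) Π_X`, and `log π_X = -log d_X · Π_X` on the support of `ω`.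
After cancelling `tr ω log ω` the claim becomes `tr ω log (Π_X (ρ ⊗ 1) Π_X) ≥ tr ρ log ρ`, and
`tr ρ log ρ = tr ω log (ρ ⊗ 1)`. So it is a Jensen-type inequality for the compression of
`A = ρ ⊗ 1` by `Π_X`, seen by a state supported under `Π_X` and inside the support of `A`. It holds
for the resolvents, `tr ω (Π A Π + t)⁻¹ ≤ tr ω (A + t)⁻¹` for all `t > 0`, and integrating
`d/dt log (x + t) = (x + t)⁻¹` over `t ∈ (0, ∞)` turns this into the inequality for logarithms.
-/

section LogComparison

open Filter Topology Real

variable {ι κ : Type*} [Fintype ι] [Fintype κ]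

theorem hasDerivAt_sum_log_add_mul {w l : ι → ℝ} {T : ℝ} (h : ∀ i, l i + T ≠ 0) :
    HasDerivAt (fun T => ∑ i, log (l i + T) * w i) (∑ i, (l i + T)⁻¹ * w i) T := by
  refine HasDerivAt.fun_sum fun i _ => ?_
  simpa using (((hasDerivAt_id T).const_add (l i)).log (h i)).mul_const (w i)

theorem tendsto_sum_log_add_mul_sub_log_mul_atTop (w l : ι → ℝ) :
    Tendsto (fun T => ∑ i, log (l i + T) * w i - log T * ∑ i, w i) atTop (𝓝 0) := by
  have h := tendsto_finsetSum Finset.univ fun i _ =>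
    ((tendsto_log_comp_add_sub_log (l i)).mul_const (w i))
  simp only [zero_mul, Finset.sum_const_zero] at h
  refine h.congr fun T => ?_
  simp only [Finset.mul_sum, ← Finset.sum_sub_distrib, sub_mul, add_comm]

theorem tendsto_sum_log_add_mul_nhdsGT_zero {w l : ι → ℝ} (hwl : ∀ i, l i = 0 → w i = 0) :
    Tendsto (fun T => ∑ i, log (l i + T) * w i) (𝓝[>] 0) (𝓝 (∑ i, log (l i) * w i)) := by
  refine tendsto_finsetSum _ fun i _ => tendsto_nhdsWithin_of_tendsto_nhds ?_
  by_cases hl : l i = 0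
  · simp [hwl i hl]
  · have hc : ContinuousAt (fun T => l i + T) 0 := by fun_prop
    simpa using ((hc.log (by simpa using hl)).mul_const (w i)).tendsto

/-- `T ↦ ∑ log (m + T) s - ∑ log (l + T) w` is monotone on `(0, ∞)` by `hres` and tends to `0` at
infinity by `hsum`, so it is nonpositive; its limit at `0⁺` is the claim. -/
theorem sum_log_mul_le_of_sum_inv_add_mul_le {w l : ι → ℝ} {s m : κ → ℝ}
    (hl : ∀ i, 0 ≤ l i) (hm : ∀ j, 0 ≤ m j)
    (hwl : ∀ i, l i = 0 → w i = 0) (hsm : ∀ j, m j = 0 → s j = 0)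
    (hsum : ∑ i, w i = ∑ j, s j)
    (hres : ∀ t, 0 < t → ∑ i, (l i + t)⁻¹ * w i ≤ ∑ j, (m j + t)⁻¹ * s j) :
    ∑ j, log (m j) * s j ≤ ∑ i, log (l i) * w i := by
  set F : ℝ → ℝ := fun T => ∑ j, log (m j + T) * s j - ∑ i, log (l i + T) * w i
  have hF : ∀ T ∈ Set.Ioi (0 : ℝ),
      HasDerivAt F (∑ j, (m j + T)⁻¹ * s j - ∑ i, (l i + T)⁻¹ * w i) T := fun T (hT : 0 < T) =>
    (hasDerivAt_sum_log_add_mul fun j => by linarith [hm j]).sub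
      (hasDerivAt_sum_log_add_mul fun i => by linarith [hl i])
  have hmono : MonotoneOn F (Set.Ioi 0) := by
    refine monotoneOn_of_hasDerivWithinAt_nonneg (convex_Ioi 0)
      (fun T hT => (hF T hT).continuousAt.continuousWithinAt)
      (fun T hT => (hF T (interior_subset hT)).hasDerivWithinAt) fun T hT => ?_
    rw [interior_Ioi] at hT
    linarith [hres T hT]
  have htop : Tendsto F atTop (𝓝 0) := by
    have := (tendsto_sum_log_add_mul_sub_log_mul_atTop s m).sub
      (tendsto_sum_log_add_mul_sub_log_mul_atTop w l)
    rw [sub_zero] at this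
    refine this.congr fun T => ?_
    rw [hsum]
    ring
  have hneg : ∀ T ∈ Set.Ioi (0 : ℝ), F T ≤ 0 := fun T hT =>
    ge_of_tendsto htop <| eventually_ge_atTop T |>.mono fun T' hT' =>
      hmono hT (lt_of_lt_of_le hT hT') hT'
  have hzero := (tendsto_sum_log_add_mul_nhdsGT_zero hsm).sub
    (tendsto_sum_log_add_mul_nhdsGT_zero hwl)
  have := le_of_tendsto hzero (eventually_nhdsWithin_of_forall hneg)
  linarith

end LogComparison

section SpectralCalculus

variable {ι κ : Type*} [Fintype ι] [DecidableEq ι]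

theorem diagonal_comp_mul_eq_mul_diagonal_comp [Fintype κ] [DecidableEq κ] {R α : Type*}
    [CommRing R] [IsDomain R]
    {φ : α → R} (hφ : φ.Injective) {a : ι → α} {b : κ → α} {W : Matrix ι κ R}
    (h : diagonal (φ ∘ a) * W = W * diagonal (φ ∘ b)) (f : α → R) :
    diagonal (f ∘ a) * W = W * diagonal (f ∘ b) := by
  ext i j
  have hij := congrFun (congrFun h i) j
  simp only [diagonal_mul, mul_diagonal, Function.comp_apply] at hij ⊢
  by_cases hW : W i j = 0
  · simp [hW]
  · rw [hφ (mul_right_cancel₀ hW (hij.trans (mul_comm _ _))), mul_comm]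

theorem Matrix.IsHermitian.eq_eigenvectorUnitary_conj {A : Matrix ι ι ℂ} (hA : A.IsHermitian) :
    A = (hA.eigenvectorUnitary : Matrix ι ι ℂ) * diagonal (fun i => (hA.eigenvalues i : ℂ)) *
      star (hA.eigenvectorUnitary : Matrix ι ι ℂ) := by
  simpa [Function.comp_def] using hA.spectral_theorem

theorem isHermitian_unitary_conj_diagonal (V : Matrix ι ι ℂ) (γ : ι → ℝ) :
    (V * diagonal (fun i => (γ i : ℂ)) * star V).IsHermitian :=
  isHermitian_mul_mul_conjTranspose _ <| by
    simp [IsHermitian, diagonal_conjTranspose, Pi.star_def]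

theorem hermFun_eq_of_unitary (f : ℝ → ℂ) {A V : Matrix ι ι ℂ} (hV : V ∈ unitaryGroup ι ℂ)
    {γ : ι → ℝ} (hA : A = V * diagonal (fun i => (γ i : ℂ)) * star V) :
    hermFun f A = V * diagonal (f ∘ γ) * star V := by
  have hAh : A.IsHermitian := hA ▸ isHermitian_unitary_conj_diagonal V γ
  set U : Matrix ι ι ℂ := (hAh.eigenvectorUnitary : Matrix ι ι ℂ)
  have hU : U ∈ unitaryGroup ι ℂ := hAh.eigenvectorUnitary.2
  have hW : diagonal (Complex.ofReal ∘ hAh.eigenvalues) * (star U * V) =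
      (star U * V) * diagonal (Complex.ofReal ∘ γ) := by
    have h := hAh.eq_eigenvectorUnitary_conj.symm.trans hA
    calc _ = star U * (U * diagonal (fun i => (hAh.eigenvalues i : ℂ)) * star U) * V := by
          simp only [← mul_assoc, Unitary.star_mul_self_of_mem hU, one_mul]
          rfl
      _ = _ := by
          rw [h]
          simp only [mul_assoc, Unitary.star_mul_self_of_mem hV, mul_one]
          rfl
  have hfW := diagonal_comp_mul_eq_mul_diagonal_comp Complex.ofReal_injective hW f
  rw [hermFun, dif_pos hAh]
  calc U * diagonal (fun i => f (hAh.eigenvalues i)) * star U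
      = U * (diagonal (f ∘ hAh.eigenvalues) * (star U * V)) * star V := by
        simp only [mul_assoc, Unitary.mul_star_self_of_mem hV, mul_one]
        rfl
    _ = V * diagonal (f ∘ γ) * star V := by
        rw [hfW]
        simp only [← mul_assoc, Unitary.mul_star_self_of_mem hU, one_mul]

theorem trace_mul_conj_diagonal {R : Type*} [CommSemiring R] (M V W : Matrix ι ι R)
    (g : ι → R) : (M * (V * diagonal g * W)).trace = ∑ i, g i * (W * M * V) i i := by
  rw [← mul_assoc, trace_mul_comm, ← mul_assoc, ← mul_assoc, trace]
  simp [mul_diagonal, mul_comm]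

theorem re_trace_mul_conj_diagonal (M V : Matrix ι ι ℂ) (g : ι → ℝ) :
    (M * (V * diagonal (fun i => (g i : ℂ)) * star V)).trace.re =
      ∑ i, g i * ((star V * M * V) i i).re := by
  simp [trace_mul_conj_diagonal]

theorem re_trace_mul_matLog_eq_sum (M : Matrix ι ι ℂ) {A V : Matrix ι ι ℂ}
    (hV : V ∈ unitaryGroup ι ℂ) {γ : ι → ℝ}
    (hA : A = V * diagonal (fun i => (γ i : ℂ)) * star V) :
    (M * matLog A).trace.re = ∑ i, Real.log (γ i) * ((star V * M * V) i i).re := by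
  rw [matLog, hermFun_eq_of_unitary _ hV hA]
  exact re_trace_mul_conj_diagonal M V _

theorem sum_re_diag_star_mul_mul_of_unitary (M : Matrix ι ι ℂ) {V : Matrix ι ι ℂ}
    (hV : V ∈ unitaryGroup ι ℂ) : ∑ i, ((star V * M * V) i i).re = M.trace.re := by
  rw [← Complex.re_sum]
  change (star V * M * V).trace.re = _
  rw [trace_mul_cycle, Unitary.mul_star_self_of_mem hV, one_mul]

theorem diag_star_mul_mul_eq_zero_of_ker_le {M A V : Matrix ι ι ℂ} (hV : V ∈ unitaryGroup ι ℂ)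
    {γ : ι → ℝ} (hA : A = V * diagonal (fun i => (γ i : ℂ)) * star V)
    (hker : LinearMap.ker A.mulVecLin ≤ LinearMap.ker M.mulVecLin) {i : ι} (hi : γ i = 0) :
    (star V * M * V) i i = 0 := by
  have hAV : A *ᵥ (V *ᵥ Pi.single i 1) = 0 := by
    rw [hA, mulVec_mulVec, mul_assoc, Unitary.star_mul_self_of_mem hV, mul_one, ← mulVec_mulVec,
      mulVec_single_one]
    simp [hi]
  have hMV : M *ᵥ (V *ᵥ Pi.single i 1) = 0 := hker hAV
  have : (star V * M * V) *ᵥ Pi.single i 1 = 0 := by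
    rw [← mulVec_mulVec, ← mulVec_mulVec, hMV, mulVec_zero]
  simpa [mulVec_single_one] using congrFun this i

end SpectralCalculus

section Support

variable {ι : Type*} [Fintype ι]

theorem ker_le_ker_of_mul_eq_self {M N : Matrix ι ι ℂ} (h : M * N = M) :
    LinearMap.ker N.mulVecLin ≤ LinearMap.ker M.mulVecLin := by
  intro v (hv : N *ᵥ v = 0)
  show M *ᵥ v = 0
  rw [← h, ← mulVec_mulVec, hv, mulVec_zero]

theorem ker_mul_mul_le_of_ker_le {P A ω : Matrix ι ι ℂ} (hP : IsStarProjection P)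
    (hA : A.PosSemidef) (hωP : ω * P = ω)
    (hker : LinearMap.ker A.mulVecLin ≤ LinearMap.ker ω.mulVecLin) :
    LinearMap.ker (P * A * P).mulVecLin ≤ LinearMap.ker ω.mulVecLin := by
  intro v (hv : (P * A * P) *ᵥ v = 0)
  have hAPv : A *ᵥ (P *ᵥ v) = 0 := by
    rw [← hA.dotProduct_mulVec_zero_iff, star_mulVec, ← dotProduct_mulVec,
      show Pᴴ = P from hP.isSelfAdjoint, mulVec_mulVec, mulVec_mulVec, hv,
      dotProduct_zero]
  show ω *ᵥ v = 0
  rw [← hωP, ← mulVec_mulVec]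
  exact hker hAPv

theorem Matrix.mul_eq_self_of_range_le {P M : Matrix ι ι ℂ} (hP : IsIdempotentElem P)
    (h : LinearMap.range M.mulVecLin ≤ LinearMap.range P.mulVecLin) : P * M = M := by
  refine ext_iff_mulVec.mpr fun v => ?_
  obtain ⟨u, hu : P *ᵥ u = M *ᵥ v⟩ := h ⟨v, rfl⟩
  rw [← mulVec_mulVec, ← hu, mulVec_mulVec, hP.eq]

theorem Matrix.IsHermitian.mul_eq_self_of_range_le {P M : Matrix ι ι ℂ} (hM : M.IsHermitian)
    (hP : IsStarProjection P) (h : LinearMap.range M.mulVecLin ≤ LinearMap.range P.mulVecLin) :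
    M * P = M := by
  simpa [hM.eq, show Pᴴ = P from hP.isSelfAdjoint] using
    congrArg (·ᴴ) (Matrix.mul_eq_self_of_range_le hP.isIdempotentElem h)

theorem IsStarProjection.natCast_pos_of_mul_eq_self {P ρ : Matrix ι ι ℂ}
    (hP : IsStarProjection P) {D : ℕ} (hPD : P.trace = D) (hρP : ρ * P = ρ)
    (hρ : ρ.trace = 1) : (0 : ℝ) < D := by
  have hPpsd : P.PosSemidef := by
    simpa [show Pᴴ = P from hP.isSelfAdjoint, hP.isIdempotentElem.eq] using
      posSemidef_conjTranspose_mul_self P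
  rcases Nat.eq_zero_or_pos D with hD | hD
  · rw [hD, Nat.cast_zero, hPpsd.trace_eq_zero_iff] at hPD
    rw [← hρP, hPD, mul_zero, trace_zero] at hρ
    exact absurd hρ zero_ne_one
  · exact_mod_cast hD

end Support

section Resolvent

variable {ι : Type*} [Fintype ι] [DecidableEq ι]

theorem inv_add_smul_one_eq_of_unitary {A V : Matrix ι ι ℂ} (hV : V ∈ unitaryGroup ι ℂ)
    {γ : ι → ℝ} (hA : A = V * diagonal (fun i => (γ i : ℂ)) * star V) {t : ℝ}
    (ht : ∀ i, γ i + t ≠ 0) :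
    (A + (t : ℂ) • 1)⁻¹ = V * diagonal (fun i => (((γ i + t)⁻¹ : ℝ) : ℂ)) * star V := by
  have hAt : A + (t : ℂ) • 1 = V * diagonal (fun i => ((γ i + t : ℝ) : ℂ)) * star V := by
    have hdiag : diagonal (fun i => ((γ i + t : ℝ) : ℂ)) =
        diagonal (fun i => (γ i : ℂ)) + (t : ℂ) • 1 := by
      ext i j
      rcases eq_or_ne i j with rfl | hij <;> simp [*]
    rw [hA, hdiag, mul_add, add_mul, Matrix.mul_smul, mul_one, Matrix.smul_mul,
      Unitary.mul_star_self_of_mem hV]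
  rw [hAt]
  refine inv_eq_left_inv ?_
  simp only [mul_assoc]
  rw [← mul_assoc (star V) V, Unitary.star_mul_self_of_mem hV, one_mul, ← mul_assoc (diagonal _),
    diagonal_mul_diagonal]
  have hone : (fun i => (((γ i + t)⁻¹ : ℝ) : ℂ) * ((γ i + t : ℝ) : ℂ)) = fun _ => 1 :=
    funext fun i => by rw [← Complex.ofReal_mul, inv_mul_cancel₀ (ht i), Complex.ofReal_one]
  rw [hone, diagonal_one, one_mul, Unitary.mul_star_self_of_mem hV]

theorem Matrix.PosSemidef.re_trace_mul_nonneg {A B : Matrix ι ι ℂ} (hA : A.PosSemidef)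
    (hB : B.PosSemidef) : 0 ≤ (A * B).trace.re := by
  open scoped MatrixOrder in
  obtain ⟨X, rfl⟩ := CStarAlgebra.nonneg_iff_eq_star_mul_self.mp hA.nonneg
  rw [mul_assoc, trace_mul_comm, mul_assoc, ← mul_assoc, star_eq_conjTranspose]
  exact (Complex.nonneg_iff.mp (hB.mul_mul_conjTranspose_same X).trace_nonneg).1

theorem conjTranspose_mul_mul_inv_sub_inv {P B C : Matrix ι ι ℂ} (hP : IsStarProjection P)
    (hB : B.PosDef) (hC : C.PosDef) (hCP : C * P = P * C) (hPBP : P * B * P = P * C * P) :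
    ((B⁻¹ - C⁻¹) * P)ᴴ * B * ((B⁻¹ - C⁻¹) * P) = P * B⁻¹ * P - P * C⁻¹ * P := by
  have hPP : P * P = P := hP.isIdempotentElem
  have hPh : Pᴴ = P := hP.isSelfAdjoint
  have hBu : IsUnit B.det := (isUnit_iff_isUnit_det B).mp hB.isUnit
  have hCu : IsUnit C.det := (isUnit_iff_isUnit_det C).mp hC.isUnit
  have hBB : ∀ Z, B⁻¹ * (B * Z) = Z := fun Z => by rw [← mul_assoc, nonsing_inv_mul B hBu, one_mul]
  have hBB' : ∀ Z, B * (B⁻¹ * Z) = Z := fun Z => by rw [← mul_assoc, mul_nonsing_inv B hBu, one_mul]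
  have hCP' : ∀ Z, C * (P * Z) = P * (C * Z) := fun Z => by rw [← mul_assoc, hCP, mul_assoc]
  have hPP' : ∀ Z, P * (P * Z) = P * Z := fun Z => by rw [← mul_assoc, hPP]
  have hPBP' : ∀ Z, P * (B * (P * Z)) = P * (C * (P * Z)) := fun Z => by
    simp only [← mul_assoc, hPBP]
  have hC'P : C⁻¹ * P = P * C⁻¹ := by
    calc C⁻¹ * P = C⁻¹ * (P * C) * C⁻¹ := by
          rw [mul_assoc, mul_assoc, mul_nonsing_inv C hCu, mul_one]
      _ = P * C⁻¹ := by rw [← hCP, ← mul_assoc, nonsing_inv_mul C hCu, one_mul]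
  have hPC' : ∀ Z, P * (C⁻¹ * Z) = C⁻¹ * (P * Z) := fun Z => by
    rw [← mul_assoc, ← hC'P, mul_assoc]
  have hCBC : P * (C⁻¹ * (B * (C⁻¹ * P))) = P * (C⁻¹ * P) := by
    simp only [hC'P, hPC', hPBP', hCP', hPP', hPP, mul_nonsing_inv C hCu, mul_one]
  simp only [conjTranspose_mul, conjTranspose_sub, conjTranspose_nonsing_inv, hB.isHermitian.eq,
    hC.isHermitian.eq, hPh, sub_mul, mul_sub, mul_assoc, hBB, hBB', hCBC]
  abel

/-- With `B = A + t`, `C = P A P + t` and `N = (B⁻¹ - C⁻¹) P` one has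
`Nᴴ B N = P B⁻¹ P - P C⁻¹ P ≥ 0`. -/
theorem re_trace_mul_inv_compress_le {P A ω : Matrix ι ι ℂ} (hP : IsStarProjection P)
    (hA : A.PosSemidef) (hω : ω.PosSemidef) (hωP : ω * P = ω) {t : ℝ} (ht : 0 < t) :
    (ω * (P * A * P + (t : ℂ) • 1)⁻¹).trace.re ≤ (ω * (A + (t : ℂ) • 1)⁻¹).trace.re := by
  have hPP : P * P = P := hP.isIdempotentElem
  have hPh : Pᴴ = P := hP.isSelfAdjoint
  have hPω : P * ω = ω := by
    simpa [hω.isHermitian.eq, hPh] using congrArg (·ᴴ) hωP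
  have ht' : ((t : ℂ) • 1 : Matrix ι ι ℂ).PosDef := PosDef.one.smul (by exact_mod_cast ht)
  set B := A + (t : ℂ) • 1
  set C := P * A * P + (t : ℂ) • 1
  have hB : B.PosDef := PosDef.posSemidef_add hA ht'
  have hC : C.PosDef :=
    PosDef.posSemidef_add (by simpa [hPh] using hA.mul_mul_conjTranspose_same P) ht'
  have hCP : C * P = P * C := by
    simp only [C, add_mul, mul_add, Matrix.smul_mul, Matrix.mul_smul, one_mul, mul_one, mul_assoc,
      hPP]
    simp only [← mul_assoc, hPP]
  have hPBP : P * B * P = P * C * P := by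
    simp only [B, C, add_mul, mul_add, Matrix.smul_mul, Matrix.mul_smul, mul_one, mul_assoc, hPP]
    simp only [← mul_assoc, hPP]
  have hcompress : ∀ M, (ω * (P * M * P)).trace = (ω * M).trace := fun M => by
    rw [← mul_assoc, ← mul_assoc, hωP, trace_mul_cycle, hPω]
  have := hω.re_trace_mul_nonneg (hB.posSemidef.conjTranspose_mul_mul_same ((B⁻¹ - C⁻¹) * P))
  rw [conjTranspose_mul_mul_inv_sub_inv hP hB hC hCP hPBP, mul_sub, trace_sub, Complex.sub_re,
    hcompress, hcompress] at this
  linarith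

end Resolvent

section MatrixLog

variable {ι : Type*} [Fintype ι] [DecidableEq ι]

theorem re_trace_mul_inv_add_smul_one_eq_sum (M : Matrix ι ι ℂ) {A V : Matrix ι ι ℂ}
    (hV : V ∈ unitaryGroup ι ℂ) {γ : ι → ℝ}
    (hA : A = V * diagonal (fun i => (γ i : ℂ)) * star V) {t : ℝ} (ht : ∀ i, γ i + t ≠ 0) :
    (M * (A + (t : ℂ) • 1)⁻¹).trace.re = ∑ i, (γ i + t)⁻¹ * ((star V * M * V) i i).re := by
  rw [inv_add_smul_one_eq_of_unitary hV hA ht]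
  exact re_trace_mul_conj_diagonal M V _

/-- As `Real.log 0 = 0`, `matLog` is the logarithm on the support only; `hker` keeps `ω` inside the
support of `A`, and then also of `P * A * P`, so that the junk values carry no weight. -/
theorem re_trace_mul_matLog_le_matLog_compress {P A ω : Matrix ι ι ℂ} (hP : IsStarProjection P)
    (hA : A.PosSemidef) (hω : ω.PosSemidef) (hωP : ω * P = ω)
    (hker : LinearMap.ker A.mulVecLin ≤ LinearMap.ker ω.mulVecLin) :
    (ω * matLog A).trace.re ≤ (ω * matLog (P * A * P)).trace.re := by
  have hPAP : (P * A * P).PosSemidef := by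
    simpa [show Pᴴ = P from hP.isSelfAdjoint] using hA.mul_mul_conjTranspose_same P
  have hV := hA.isHermitian.eigenvectorUnitary.2
  have hU := hPAP.isHermitian.eigenvectorUnitary.2
  have hAV := hA.isHermitian.eq_eigenvectorUnitary_conj
  have hPAPU := hPAP.isHermitian.eq_eigenvectorUnitary_conj
  rw [re_trace_mul_matLog_eq_sum ω hV hAV, re_trace_mul_matLog_eq_sum ω hU hPAPU]
  refine sum_log_mul_le_of_sum_inv_add_mul_le hPAP.eigenvalues_nonneg hA.eigenvalues_nonneg
    (fun i hi => ?_) (fun j hj => ?_) ?_ fun t ht => ?_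
  · rw [diag_star_mul_mul_eq_zero_of_ker_le hU hPAPU
      (ker_mul_mul_le_of_ker_le hP hA hωP hker) hi, Complex.zero_re]
  · rw [diag_star_mul_mul_eq_zero_of_ker_le hV hAV hker hj, Complex.zero_re]
  · rw [sum_re_diag_star_mul_mul_of_unitary ω hU, sum_re_diag_star_mul_mul_of_unitary ω hV]
  · rw [← re_trace_mul_inv_add_smul_one_eq_sum ω hU hPAPU fun i => by
        linarith [hPAP.eigenvalues_nonneg i],
      ← re_trace_mul_inv_add_smul_one_eq_sum ω hV hAV fun j => by
        linarith [hA.eigenvalues_nonneg j]]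
    exact re_trace_mul_inv_compress_le hP hA hω hωP ht

theorem re_trace_mul_matLog_smul {σ ω : Matrix ι ι ℂ} (hσ : σ.IsHermitian)
    (hker : LinearMap.ker σ.mulVecLin ≤ LinearMap.ker ω.mulVecLin) {c : ℝ} (hc : 0 < c) :
    (ω * matLog ((c : ℂ) • σ)).trace.re = Real.log c * ω.trace.re + (ω * matLog σ).trace.re := by
  have hV := hσ.eigenvectorUnitary.2
  have hσV := hσ.eq_eigenvectorUnitary_conj
  have hcσV : (c : ℂ) • σ = (hσ.eigenvectorUnitary : Matrix ι ι ℂ) *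
      diagonal (fun i => ((c * hσ.eigenvalues i : ℝ) : ℂ)) *
      star (hσ.eigenvectorUnitary : Matrix ι ι ℂ) := by
    conv_lhs => rw [hσV]
    rw [← Matrix.smul_mul, ← Matrix.mul_smul]
    congr 2
    ext i j
    rcases eq_or_ne i j with rfl | hij
    · simp
    · simp [hij]
  rw [re_trace_mul_matLog_eq_sum ω hV hcσV, re_trace_mul_matLog_eq_sum ω hV hσV,
    ← sum_re_diag_star_mul_mul_of_unitary ω hV, Finset.mul_sum, ← Finset.sum_add_distrib]
  refine Finset.sum_congr rfl fun i _ => ?_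
  by_cases hi : hσ.eigenvalues i = 0
  · simp [diag_star_mul_mul_eq_zero_of_ker_le hV hσV hker hi]
  · rw [Real.log_mul hc.ne' hi]
    ring

theorem matLog_eq_zero_of_isStarProjection {P : Matrix ι ι ℂ} (hP : IsStarProjection P) :
    matLog P = 0 := by
  have hPh : P.IsHermitian := hP.isSelfAdjoint
  have hlog : (fun i => (Real.log (hPh.eigenvalues i) : ℂ)) = 0 := funext fun i => by
    obtain h | h : hPh.eigenvalues i = 0 ∨ hPh.eigenvalues i = 1 :=
      hP.isIdempotentElem.spectrum_subset ℝ (hPh.eigenvalues_mem_spectrum_real i)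
    all_goals simp [h]
  simp [matLog, hermFun, hPh, hlog]

theorem relEnt_eq_sub (ρ σ : Matrix ι ι ℂ) :
    relEnt ρ σ = (ρ * matLog ρ).trace.re - (ρ * matLog σ).trace.re := by
  rw [relEnt, mul_sub, trace_sub, Complex.sub_re]

theorem relEnt_inv_smul_of_isStarProjection {ρ P : Matrix ι ι ℂ} (hP : IsStarProjection P)
    (hρP : ρ * P = ρ) (hρ : ρ.trace = 1) {D : ℝ} (hD : 0 < D) :
    relEnt ρ ((D : ℂ)⁻¹ • P) = (ρ * matLog ρ).trace.re + Real.log D := by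
  rw [relEnt_eq_sub, ← Complex.ofReal_inv, re_trace_mul_matLog_smul hP.isSelfAdjoint
    (ker_le_ker_of_mul_eq_self hρP) (inv_pos.mpr hD), matLog_eq_zero_of_isStarProjection hP, hρ,
    Real.log_inv]
  simp

end MatrixLog

section Reindex

variable {ι κ : Type*} [Fintype ι] [Fintype κ]

theorem trace_submatrix_equiv (M : Matrix ι ι ℂ) (e : κ ≃ ι) :
    (M.submatrix e e).trace = M.trace :=
  e.sum_comp fun i => M i i

theorem IsStarProjection.submatrix_equiv {R : Type*} [Semiring R] [StarRing R]
    {P : Matrix ι ι R} (hP : IsStarProjection P) (e : κ ≃ ι) :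
    IsStarProjection (P.submatrix e e) where
  isIdempotentElem := by
    rw [IsIdempotentElem, submatrix_mul_equiv, hP.isIdempotentElem.eq]
  isSelfAdjoint := by
    rw [IsSelfAdjoint, star_eq_conjTranspose, conjTranspose_submatrix, ← star_eq_conjTranspose,
      hP.isSelfAdjoint.star_eq]

variable [DecidableEq ι] [DecidableEq κ]

theorem hermFun_submatrix_equiv (f : ℝ → ℂ) (A : Matrix ι ι ℂ) (e : κ ≃ ι) :
    hermFun f (A.submatrix e e) = (hermFun f A).submatrix e e := by
  by_cases hA : A.IsHermitian
  · set V : Matrix ι ι ℂ := (hA.eigenvectorUnitary : Matrix ι ι ℂ)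
    have hV : V ∈ unitaryGroup ι ℂ := hA.eigenvectorUnitary.2
    have hVe : V.submatrix e e ∈ unitaryGroup κ ℂ := by
      rw [mem_unitaryGroup_iff, star_eq_conjTranspose, conjTranspose_submatrix,
        submatrix_mul_equiv, ← star_eq_conjTranspose, Unitary.mul_star_self_of_mem hV,
        submatrix_one_equiv]
    have hconj : ∀ D : Matrix ι ι ℂ, (V * D * star V).submatrix e e =
        V.submatrix e e * D.submatrix e e * star (V.submatrix e e) := fun D => by
      simp only [star_eq_conjTranspose, conjTranspose_submatrix]
      rw [submatrix_mul_equiv, submatrix_mul_equiv]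
    have hAe : A.submatrix e e = V.submatrix e e *
        diagonal (fun i => (hA.eigenvalues (e i) : ℂ)) * star (V.submatrix e e) := by
      conv_lhs => rw [hA.eq_eigenvectorUnitary_conj]
      rw [hconj, submatrix_diagonal_equiv]
      rfl
    rw [hermFun_eq_of_unitary f hVe hAe, hermFun_eq_of_unitary f hV hA.eq_eigenvectorUnitary_conj,
      hconj, submatrix_diagonal_equiv]
    rfl
  · have hAe : ¬(A.submatrix e e).IsHermitian := fun h =>
      hA (by simpa using h.submatrix e.symm)
    simp [hermFun, hA, hAe]

end Reindex

section PartialTrace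

variable {α β : Type*} [Fintype β]

theorem trB_eq_sum_submatrix (M : Matrix (α × β) (α × β) ℂ) :
    trB M = ∑ b, M.submatrix (·, b) (·, b) := by
  ext a a'
  simp [trB, Matrix.sum_apply]

theorem Matrix.PosSemidef.trB {M : Matrix (α × β) (α × β) ℂ} (hM : M.PosSemidef) :
    (trB M).PosSemidef := by
  rw [trB_eq_sum_submatrix]
  exact posSemidef_sum _ fun b _ => hM.submatrix _

variable [Fintype α]

theorem trace_trB (M : Matrix (α × β) (α × β) ℂ) : (trB M).trace = M.trace := by
  simp [trace, trB, Fintype.sum_prod_type]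

variable [DecidableEq β]

theorem trace_mul_kronecker_one [DecidableEq α] (M : Matrix (α × β) (α × β) ℂ)
    (N : Matrix α α ℂ) : (M * (N ⊗ₖ (1 : Matrix β β ℂ))).trace = (trB M * N).trace := by
  simp only [trace, diag_apply, mul_apply, trB, Fintype.sum_prod_type, kroneckerMap_apply,
    one_apply, Finset.sum_mul, mul_ite, mul_one, mul_zero, Finset.sum_ite_eq', Finset.mem_univ,
    if_true]
  exact Finset.sum_congr rfl fun a _ => Finset.sum_comm

theorem ker_trB_kronecker_one_le [DecidableEq α] {ω : Matrix (α × β) (α × β) ℂ}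
    (hω : ω.PosSemidef) :
    LinearMap.ker (trB ω ⊗ₖ (1 : Matrix β β ℂ)).mulVecLin ≤ LinearMap.ker ω.mulVecLin := by
  intro v (hv : (trB ω ⊗ₖ (1 : Matrix β β ℂ)) *ᵥ v = 0)
  let lift (x : α → ℂ) (b : β) : α × β → ℂ := fun p => if p.2 = b then x p.1 else 0
  have hquad : ∀ x, star x ⬝ᵥ (trB ω *ᵥ x) = ∑ b, star (lift x b) ⬝ᵥ (ω *ᵥ lift x b) := by
    intro x
    simp only [lift, trB, dotProduct, mulVec, Fintype.sum_prod_type, Pi.star_apply,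
      apply_ite star, star_zero, ite_mul, zero_mul, mul_ite, mul_zero, Finset.sum_ite_eq',
      Finset.mem_univ, if_true]
    simp only [Finset.mul_sum, Finset.sum_mul]
    conv_rhs => rw [Finset.sum_comm]
    exact Finset.sum_congr rfl fun a _ => Finset.sum_comm
  have hslice : ∀ b, trB ω *ᵥ (fun a => v (a, b)) = 0 := fun b => funext fun a => by
    simpa [mulVec, dotProduct, Fintype.sum_prod_type, kroneckerMap_apply, one_apply]
      using congrFun hv (a, b)
  have hlift : ∀ b, ω *ᵥ lift (fun a => v (a, b)) b = 0 := fun b => by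
    have h0 := hquad fun a => v (a, b)
    rw [hslice, dotProduct_zero, eq_comm,
      Finset.sum_eq_zero_iff_of_nonneg fun b' _ => hω.dotProduct_mulVec_nonneg _] at h0
    exact (hω.dotProduct_mulVec_zero_iff _).mp (h0 b (Finset.mem_univ _))
  have hv_eq : v = ∑ b, lift (fun a => v (a, b)) b := funext fun p => by simp [lift]
  show ω *ᵥ v = 0
  rw [hv_eq, mulVec_sum]
  exact Finset.sum_eq_zero fun b _ => hlift b

theorem hermFun_kronecker_one [DecidableEq α] (f : ℝ → ℂ) {A : Matrix α α ℂ}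
    (hA : A.IsHermitian) : hermFun f (A ⊗ₖ (1 : Matrix β β ℂ)) = hermFun f A ⊗ₖ 1 := by
  set V : Matrix α α ℂ := (hA.eigenvectorUnitary : Matrix α α ℂ)
  have hV : V ∈ unitaryGroup α ℂ := hA.eigenvectorUnitary.2
  have hVk : V ⊗ₖ (1 : Matrix β β ℂ) ∈ unitaryGroup (α × β) ℂ := by
    rw [mem_unitaryGroup_iff, star_eq_conjTranspose, conjTranspose_kronecker, ← mul_kronecker_mul,
      ← star_eq_conjTranspose, Unitary.mul_star_self_of_mem hV, conjTranspose_one, mul_one,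
      one_kronecker_one]
  have hdiag : ∀ g : ℝ → ℂ, diagonal (g ∘ hA.eigenvalues) ⊗ₖ (1 : Matrix β β ℂ) =
      diagonal (g ∘ fun p => hA.eigenvalues p.1) := fun g => by
    rw [← diagonal_one, diagonal_kronecker_diagonal]
    simp [Function.comp_def]
  have hconj : ∀ D : Matrix α α ℂ,
      (V * D * star V) ⊗ₖ (1 : Matrix β β ℂ) = (V ⊗ₖ 1) * (D ⊗ₖ 1) * star (V ⊗ₖ 1) := fun D => by
    simp only [star_eq_conjTranspose, conjTranspose_kronecker, conjTranspose_one]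
    rw [← mul_kronecker_mul, ← mul_kronecker_mul, mul_one, mul_one]
  have hAk := congrArg (· ⊗ₖ (1 : Matrix β β ℂ)) hA.eq_eigenvectorUnitary_conj
  rw [hconj, ← Function.comp_def Complex.ofReal, hdiag] at hAk
  rw [hermFun_eq_of_unitary f hVk hAk, ← hdiag, ← hconj, hermFun_eq_of_unitary f hV
    hA.eq_eigenvectorUnitary_conj]

theorem re_trace_trB_mul_matLog_add_log_le [DecidableEq α] {P ω : Matrix (α × β) (α × β) ℂ}
    (hP : IsStarProjection P) (hω : ω.PosSemidef) (hωtr : ω.trace = 1) (hωP : ω * P = ω)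
    {c : ℝ} (hc : 0 < c) :
    (trB ω * matLog (trB ω)).trace.re + Real.log c ≤
      (ω * matLog ((c : ℂ) • (P * (trB ω ⊗ₖ (1 : Matrix β β ℂ)) * P))).trace.re := by
  have hA : (trB ω ⊗ₖ (1 : Matrix β β ℂ)).PosSemidef := hω.trB.kronecker PosSemidef.one
  have hkerA := ker_trB_kronecker_one_le hω
  have hPAP : (P * (trB ω ⊗ₖ (1 : Matrix β β ℂ)) * P).IsHermitian := by
    simpa [show Pᴴ = P from hP.isSelfAdjoint] using (hA.mul_mul_conjTranspose_same P).isHermitian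
  rw [re_trace_mul_matLog_smul hPAP (ker_mul_mul_le_of_ker_le hP hA hωP hkerA) hc, hωtr,
    ← trace_mul_kronecker_one, matLog, ← hermFun_kronecker_one _ hω.trB.isHermitian, ← matLog]
  have := re_trace_mul_matLog_le_matLog_compress hP hA hω hωP hkerA
  simp only [Complex.one_re, mul_one]
  linarith

end PartialTrace

section SplitTensorPower

variable {d k n : ℕ}

def splitEquiv (h : k ≤ n) : (Fin n → Fin d) ≃ (Fin k → Fin d) × (Fin (n - k) → Fin d) where
  toFun f := (fun i => f (Fin.castLE h i), fun j => f ⟨k + j, by omega⟩)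
  invFun p i := if hi : (i : ℕ) < k then p.1 ⟨i, hi⟩ else p.2 ⟨i - k, by omega⟩
  left_inv f := by
    funext i
    dsimp only
    split_ifs with hi
    · rfl
    · exact congrArg f (Fin.ext (by simp; omega))
  right_inv p := by
    ext i
    · simp
    · simp

theorem ptraceLast_eq_trB (h : k ≤ n) (ρ : Matrix (Fin n → Fin d) (Fin n → Fin d) ℂ) :
    ptraceLast h ρ = trB (ρ.submatrix (splitEquiv h).symm (splitEquiv h).symm) :=
  rfl

theorem extendId_eq_submatrix_kronecker (h : k ≤ n)
    (M : Matrix (Fin k → Fin d) (Fin k → Fin d) ℂ) :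
    extendId h M =
      (M ⊗ₖ (1 : Matrix (Fin (n - k) → Fin d) _ ℂ)).submatrix (splitEquiv h) (splitEquiv h) := by
  ext f g
  have htail :
      (∀ i : Fin n, k ≤ (i : ℕ) → f i = g i) ↔ (splitEquiv h f).2 = (splitEquiv h g).2 := by
    refine ⟨fun H => funext fun j => H _ (by simp), fun H i hi => ?_⟩
    have := congrFun H ⟨i - k, by omega⟩
    simp only [splitEquiv, Equiv.coe_fn_mk] at this
    rwa [show (⟨k + (i - k), by omega⟩ : Fin n) = i from Fin.ext (by simp; omega)] at this
  simp only [extendId, submatrix_apply, kroneckerMap_apply, one_apply, htail, mul_comm]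
  rfl

theorem Matrix.PosSemidef.ptraceLast (h : k ≤ n) {ω : Matrix (Fin n → Fin d) (Fin n → Fin d) ℂ}
    (hω : ω.PosSemidef) : (ptraceLast h ω).PosSemidef := by
  rw [ptraceLast_eq_trB]
  exact (hω.submatrix _).trB

theorem trace_ptraceLast (h : k ≤ n) (ω : Matrix (Fin n → Fin d) (Fin n → Fin d) ℂ) :
    (ptraceLast h ω).trace = ω.trace := by
  rw [ptraceLast_eq_trB, trace_trB, trace_submatrix_equiv]

theorem re_trace_ptraceLast_mul_matLog_add_log_le (h : k ≤ n)
    {P ω : Matrix (Fin n → Fin d) (Fin n → Fin d) ℂ} (hP : IsStarProjection P)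
    (hω : ω.PosSemidef) (hωtr : ω.trace = 1) (hωP : ω * P = ω) {c : ℝ} (hc : 0 < c) :
    (ptraceLast h ω * matLog (ptraceLast h ω)).trace.re + Real.log c ≤
      (ω * matLog ((c : ℂ) • (P * extendId h (ptraceLast h ω) * P))).trace.re := by
  set e := splitEquiv (d := d) h
  set ω' := ω.submatrix e.symm e.symm
  set P' := P.submatrix e.symm e.symm
  have key := re_trace_trB_mul_matLog_add_log_le (hP.submatrix_equiv e.symm)
    (hω.submatrix e.symm) ((trace_submatrix_equiv ω e.symm).trans hωtr)
    (by rw [submatrix_mul_equiv ω P _ e.symm, hωP]) hc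
  have hω' : ω = ω'.submatrix e e := by simp [ω']
  have hP' : P = P'.submatrix e e := by simp [P']
  have hσ : (c : ℂ) • (P * (trB ω' ⊗ₖ (1 : Matrix (Fin (n - k) → Fin d) _ ℂ)).submatrix e e * P) =
      ((c : ℂ) • (P' * (trB ω' ⊗ₖ 1) * P')).submatrix e e := by
    rw [hP', submatrix_mul_equiv _ _ _ e, submatrix_mul_equiv _ _ _ e]
    rfl
  rw [ptraceLast_eq_trB, extendId_eq_submatrix_kronecker, hσ]
  conv_rhs => rw [hω', matLog, hermFun_submatrix_equiv, submatrix_mul_equiv _ _ _ e,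
    trace_submatrix_equiv]
  exact key

end SplitTensorPower

theorem general_subspace_cloning_general
    (d k n : ℕ) (hkn : k ≤ n) (dX dY : ℕ)
    (PX : Matrix (Fin n → Fin d) (Fin n → Fin d) ℂ)
    (PY : Matrix (Fin k → Fin d) (Fin k → Fin d) ℂ)
    (hPX : PX * PX = PX) (hPXh : PXᴴ = PX) (hPXdim : PX.trace = (dX : ℂ))
    (hPY : PY * PY = PY) (hPYh : PYᴴ = PY) (hPYdim : PY.trace = (dY : ℂ))
    (ω : Matrix (Fin n → Fin d) (Fin n → Fin d) ℂ) (hω : IsState ω)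
    (hsuppX : LinearMap.range ω.mulVecLin ≤ LinearMap.range PX.mulVecLin)
    (hsuppY : LinearMap.range (ptraceLast hkn ω).mulVecLin ≤ LinearMap.range PY.mulVecLin) :
    relEnt ω (((dX : ℂ))⁻¹ • PX) ≥
      relEnt (genPTrace hkn PX PY ω) (((dY : ℂ))⁻¹ • PY) +
        relEnt ω (genClone hkn dX dY PX PY (genPTrace hkn PX PY ω)) := by
  obtain ⟨hωpsd, hωtr⟩ := hω
  have hX : IsStarProjection PX := ⟨hPX, hPXh⟩
  have hY : IsStarProjection PY := ⟨hPY, hPYh⟩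
  set ρ := ptraceLast hkn ω
  have hρpsd : ρ.PosSemidef := hωpsd.ptraceLast hkn
  have hρtr : ρ.trace = 1 := (trace_ptraceLast hkn ω).trans hωtr
  have hωX : ω * PX = ω := hωpsd.isHermitian.mul_eq_self_of_range_le hX hsuppX
  have hρY : ρ * PY = ρ := hρpsd.isHermitian.mul_eq_self_of_range_le hY hsuppY
  have hdX := hX.natCast_pos_of_mul_eq_self hPXdim hωX hωtr
  have hdY := hY.natCast_pos_of_mul_eq_self hPYdim hρY hρtr
  have hP : genPTrace hkn PX PY ω = ρ := by
    rw [genPTrace, mul_eq_self_of_range_le hPX hsuppX, hωX,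
      mul_eq_self_of_range_le hPY hsuppY, hρY]
  have hC : genClone hkn dX dY PX PY ρ = ((dY / dX : ℝ) : ℂ) • (PX * extendId hkn ρ * PX) := by
    rw [genClone, mul_eq_self_of_range_le hPY hsuppY, hρY]
    push_cast
    rfl
  have hπX := relEnt_inv_smul_of_isStarProjection hX hωX hωtr hdX
  have hπY := relEnt_inv_smul_of_isStarProjection hY hρY hρtr hdY
  have key := re_trace_ptraceLast_mul_matLog_add_log_le hkn hX hωpsd hωtr hωX (div_pos hdY hdX)
  rw [Complex.ofReal_natCast] at hπX hπY
  rw [Real.log_div hdY.ne' hdX.ne'] at key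
  rw [hP, hC, hπX, hπY, relEnt_eq_sub ω]
  linarith

/-- **Cloning between general subspaces.**
For subspaces `X_n ⊆ (ℂ^d)^{⊗n}` and `Y_k ⊆ (ℂ^d)^{⊗k}` given by orthogonal projections,
`D(ω‖π_{X_n}) ≥ D(P_{n→k}(ω)‖π_{Y_k}) + D(ω‖(C_{k→n}∘P_{n→k})(ω))`. -/
theorem general_subspace_cloning
    (d k n : ℕ) (hk : 1 ≤ k) (hkn : k ≤ n) (dX dY : ℕ)
    (PX : Matrix (Fin n → Fin d) (Fin n → Fin d) ℂ)
    (PY : Matrix (Fin k → Fin d) (Fin k → Fin d) ℂ)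
    (hPX : PX * PX = PX) (hPXh : PXᴴ = PX) (hPXdim : PX.trace = (dX : ℂ))
    (hPY : PY * PY = PY) (hPYh : PYᴴ = PY) (hPYdim : PY.trace = (dY : ℂ))
    (ω : Matrix (Fin n → Fin d) (Fin n → Fin d) ℂ) (hω : IsState ω)
    (hsuppX : LinearMap.range ω.mulVecLin ≤ LinearMap.range PX.mulVecLin)
    (hsuppY : LinearMap.range (ptraceLast hkn ω).mulVecLin ≤ LinearMap.range PY.mulVecLin) :
    relEnt ω (((dX : ℂ))⁻¹ • PX) ≥
      relEnt (genPTrace hkn PX PY ω) (((dY : ℂ))⁻¹ • PY) +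
        relEnt ω (genClone hkn dX dY PX PY (genPTrace hkn PX PY ω)) :=
  general_subspace_cloning_general d k n hkn dX dY PX PY hPX hPXh hPXdim hPY hPYh hPYdim ω hω hsuppX
    hsuppY
end

section
/- Let d ≥ 1 and 1 ≤ k ≤ n. The Hilbert–Schmidt adjoint of the symmetrized partial trace channel P_{n→k} equals (d[n]/d[k]) times the universal quantum cloning machine C_{k→n}; equivalently, for all linear operators X on (ℂ^d)^{⊗k} and Y on (ℂ^d)^{⊗n}, tr[X† · P_{n→k}(Y)] = (d[n]/d[k]) · tr[(C_{k→n}(X))† · Y]. -/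
open scoped BigOperators Matrix Kronecker ComplexOrder
open Matrix

noncomputable section DualityAux

namespace DualityAux

variable {d k n : ℕ}

/-- Glue a prefix function and a suffix function into a function on `Fin n`. -/
def glue (h : k ≤ n) (a : Fin k → Fin d) (z : Fin (n - k) → Fin d) : Fin n → Fin d :=
  fun i => if h' : (i : ℕ) < k then a ⟨i, h'⟩ else z ⟨(i : ℕ) - k, by have := i.isLt; omega⟩

lemma ptraceLast_eq (h : k ≤ n) (ρ : Matrix (Fin n → Fin d) (Fin n → Fin d) ℂ) (a b) :
    ptraceLast h ρ a b = ∑ z : Fin (n - k) → Fin d, ρ (glue h a z) (glue h b z) := rfl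

lemma glue_castLE (h : k ≤ n) (a : Fin k → Fin d) (z) (i : Fin k) :
    glue h a z (Fin.castLE h i) = a i := by
  have hi : ((Fin.castLE h i : Fin n) : ℕ) < k := i.isLt
  simp [glue, hi]

lemma glue_cond (h : k ≤ n) (a b : Fin k → Fin d) (z z' : Fin (n - k) → Fin d) :
    (∀ i : Fin n, k ≤ (i : ℕ) → glue h a z i = glue h b z' i) ↔ z = z' := by
  constructor
  · intro H
    funext j
    have hj : k + (j : ℕ) < n := by have := j.isLt; omega
    have hle : k ≤ ((⟨k + j, hj⟩ : Fin n) : ℕ) := by simp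
    have := H ⟨k + j, hj⟩ hle
    have hlt : ¬ (k + (j : ℕ) < k) := by omega
    simpa [glue, hlt, Nat.add_sub_cancel_left] using this
  · rintro rfl i hi
    simp [glue, Nat.not_lt.mpr hi]

/-- Splitting equivalence `(Fin k → Fin d) × (Fin (n-k) → Fin d) ≃ (Fin n → Fin d)`. -/
def splitEquiv (h : k ≤ n) : ((Fin k → Fin d) × (Fin (n - k) → Fin d)) ≃ (Fin n → Fin d) where
  toFun p := glue h p.1 p.2
  invFun f := (fun i => f (Fin.castLE h i), fun j => f ⟨k + j, by have := j.isLt; omega⟩)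
  left_inv p := by
    obtain ⟨a, z⟩ := p
    simp only [Prod.mk.injEq]
    constructor
    · funext i; exact glue_castLE h a z i
    · funext j
      have hlt : ¬ (k + (j : ℕ) < k) := by omega
      simp [glue, hlt, Nat.add_sub_cancel_left]
  right_inv f := by
    funext i
    by_cases hi : (i : ℕ) < k
    · simp only [glue, dif_pos hi]
      exact congrArg f (Fin.ext rfl)
    · simp only [glue, dif_neg hi]
      exact congrArg f (Fin.ext (show k + ((i : ℕ) - k) = (i : ℕ) by omega))

lemma trace_mul_ptraceLast (h : k ≤ n) (M : Matrix (Fin k → Fin d) (Fin k → Fin d) ℂ)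
    (Z : Matrix (Fin n → Fin d) (Fin n → Fin d) ℂ) :
    (M * ptraceLast h Z).trace = (extendId h M * Z).trace := by
  have key2 : ∀ (F : (Fin n → Fin d) → ℂ),
      ∑ f, F f = ∑ a : Fin k → Fin d, ∑ z : Fin (n - k) → Fin d, F (glue h a z) := by
    intro F
    rw [← Equiv.sum_comp (splitEquiv (d := d) h) F, Fintype.sum_prod_type]
    rfl
  rw [Matrix.trace, Matrix.trace]
  simp only [Matrix.diag, Matrix.mul_apply, ptraceLast_eq, Finset.mul_sum]
  rw [key2 (fun f => ∑ g, extendId h M f g * Z g f)]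
  refine Finset.sum_congr rfl fun a _ => ?_
  rw [Finset.sum_comm]
  refine Finset.sum_congr rfl fun z _ => ?_
  rw [key2 (fun g => extendId h M (glue h a z) g * Z g (glue h a z))]
  refine Finset.sum_congr rfl fun b _ => ?_
  simp only [extendId, glue_cond, glue_castLE]
  rw [Finset.sum_eq_single z]
  · simp
  · intro z' _ hz'
    simp [Ne.symm hz']
  · intro hz; exact absurd (Finset.mem_univ z) hz

lemma permMat_conjTranspose (d n : ℕ) (π : Equiv.Perm (Fin n)) :
    (permMat d n π)ᴴ = permMat d n π⁻¹ := by
  ext f g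
  simp only [Matrix.conjTranspose_apply, permMat]
  have hiff : (f = g ∘ ⇑π) ↔ (g = f ∘ ⇑(π⁻¹)) := by
    constructor
    · rintro rfl; funext i; simp
    · rintro rfl; funext i; simp
  rw [if_congr hiff rfl rfl]
  split <;> simp

lemma symProj_conjTranspose (d n : ℕ) : (symProj d n)ᴴ = symProj d n := by
  unfold symProj
  rw [Matrix.conjTranspose_smul, Matrix.conjTranspose_sum]
  simp only [permMat_conjTranspose]
  congr 1
  · simp
  · exact Fintype.sum_equiv (Equiv.inv (Equiv.Perm (Fin n))) _ _ (fun π => rfl)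

lemma extendId_conjTranspose (h : k ≤ n) (M : Matrix (Fin k → Fin d) (Fin k → Fin d) ℂ) :
    (extendId h M)ᴴ = extendId h Mᴴ := by
  ext f g
  simp only [Matrix.conjTranspose_apply, extendId, star_mul']
  congr 1
  · have hiff : (∀ i : Fin n, k ≤ (i : ℕ) → g i = f i) ↔ (∀ i : Fin n, k ≤ (i : ℕ) → f i = g i) :=
      forall_congr' fun i => imp_congr Iff.rfl eq_comm
    rw [if_congr hiff rfl rfl]
    split <;> simp

end DualityAux

end DualityAux

/-- **Algebraic duality of UQCM and symmetrized partial trace:**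
`tr[X† · P_{n→k}(Y)] = (d[n]/d[k]) · tr[(C_{k→n}(X))† · Y]`. -/
theorem symPTrace_adjoint_eq_uqcm
    (d k n : ℕ) (hd : 1 ≤ d) (hk : 1 ≤ k) (hkn : k ≤ n)
    (X : Matrix (Fin k → Fin d) (Fin k → Fin d) ℂ)
    (Y : Matrix (Fin n → Fin d) (Fin n → Fin d) ℂ) :
    (Xᴴ * symPTrace d hkn Y).trace =
      ((dsym d n : ℂ) / (dsym d k : ℂ)) * ((uqcm d hkn X)ᴴ * Y).trace := by
  classical
  have hkc : (dsym d k : ℂ) ≠ 0 :=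
    Nat.cast_ne_zero.mpr (Nat.choose_pos (show k ≤ d + k - 1 by omega)).ne'
  have hnc : (dsym d n : ℂ) ≠ 0 :=
    Nat.cast_ne_zero.mpr (Nat.choose_pos (show n ≤ d + n - 1 by omega)).ne'
  have hPk := DualityAux.symProj_conjTranspose d k
  have hPn := DualityAux.symProj_conjTranspose d n
  have L : (Xᴴ * symPTrace d hkn Y).trace
      = ((symProj d n * extendId hkn (symProj d k * Xᴴ * symProj d k) * symProj d n) * Y).trace := by
    unfold symPTrace
    rw [show Xᴴ * (symProj d k * ptraceLast hkn (symProj d n * Y * symProj d n) * symProj d k)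
        = (Xᴴ * (symProj d k * ptraceLast hkn (symProj d n * Y * symProj d n))) * symProj d k by
        noncomm_ring]
    rw [Matrix.trace_mul_comm]
    rw [show symProj d k * (Xᴴ * (symProj d k * ptraceLast hkn (symProj d n * Y * symProj d n)))
        = (symProj d k * Xᴴ * symProj d k) * ptraceLast hkn (symProj d n * Y * symProj d n) by
        noncomm_ring]
    rw [DualityAux.trace_mul_ptraceLast]
    rw [show extendId hkn (symProj d k * Xᴴ * symProj d k) * (symProj d n * Y * symProj d n)
        = (extendId hkn (symProj d k * Xᴴ * symProj d k) * symProj d n * Y) * symProj d n by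
        noncomm_ring]
    rw [Matrix.trace_mul_comm]
    noncomm_ring
  have hXH : (symProj d k * X * symProj d k)ᴴ = symProj d k * Xᴴ * symProj d k := by
    simp only [Matrix.conjTranspose_mul, hPk]
    noncomm_ring
  have hU : (uqcm d hkn X)ᴴ
      = ((dsym d k : ℂ) / (dsym d n : ℂ)) •
        (symProj d n * extendId hkn (symProj d k * Xᴴ * symProj d k) * symProj d n) := by
    unfold uqcm
    rw [Matrix.conjTranspose_smul]
    congr 1
    · simp
    · simp only [Matrix.conjTranspose_mul, hPn, DualityAux.extendId_conjTranspose, hXH]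
      noncomm_ring
  rw [L, hU, Matrix.smul_mul, Matrix.trace_smul, smul_eq_mul, ← mul_assoc]
  rw [div_mul_div_comm]
  rw [show (dsym d n : ℂ) * (dsym d k : ℂ) / ((dsym d k : ℂ) * (dsym d n : ℂ)) = 1 by
    rw [mul_comm]
    field_simp]
  rw [one_mul]
end

section
/- Let d ≥ 1 and 1 ≤ k ≤ n. The partial trace over the last n−k tensor factors of the maximally mixed state on the symmetric subspace of (ℂ^d)^{⊗n} equals the maximally mixed state on the symmetric subspace of (ℂ^d)^{⊗k}: tr_{n−k}[π_sym^{d,n}] = π_sym^{d,k}. -/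
open scoped BigOperators Matrix Kronecker ComplexOrder
open Matrix

/-!
Partial traces compose, so it suffices to trace out one factor at a time. The symmetric
projector is invariant under relabelling the factors, so the traced factor may be moved to the
front. Writing each `π ∈ S_{n+1}` uniquely as the transposition `(0 p)` after a permutation
`σ ∈ S_n` of the remaining factors, the entry of `P_π` at `(c, a), (c, b)` equals the entry of
`P_σ` at `a, b` when the `p`-th letter of `(c, a)` is `c`, and vanishes otherwise. There are
`d + n` such pairs `(c, p)`, so tracing out one factor maps `P_sym^{(n+1)}` to
`(d + n)/(n + 1) · P_sym^{(n)}`, and `(n + 1) d[n + 1] = (d + n) d[n]` matches the normalisations.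
-/

section PartialTrace

variable {ι : Type*} [Fintype ι]

theorem ptraceLast_self {k : ℕ} (ρ : Matrix (Fin k → ι) (Fin k → ι) ℂ) :
    ptraceLast le_rfl ρ = ρ := by
  ext a b
  have : IsEmpty (Fin (k - k)) := by rw [Nat.sub_self]; infer_instance
  simp [ptraceLast]

def appendTupleEquiv {k m n : ℕ} (hkm : k ≤ m) (hmn : m ≤ n) :
    (Fin (m - k) → ι) × (Fin (n - m) → ι) ≃ (Fin (n - k) → ι) where
  toFun zw j := if h : (j : ℕ) < m - k then zw.1 ⟨j, h⟩ else zw.2 ⟨j - (m - k), by omega⟩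
  invFun y := (fun j => y ⟨j, by omega⟩, fun j => y ⟨j + (m - k), by omega⟩)
  left_inv zw := by
    ext j <;> simp
  right_inv y := by
    funext j
    dsimp only
    split_ifs
    · rfl
    · congr 1; ext; simp; omega

theorem ptraceLast_ptraceLast {k m n : ℕ} (hkm : k ≤ m) (hmn : m ≤ n)
    (ρ : Matrix (Fin n → ι) (Fin n → ι) ℂ) :
    ptraceLast hkm (ptraceLast hmn ρ) = ptraceLast (hkm.trans hmn) ρ := by
  ext a b
  simp only [ptraceLast, ← Fintype.sum_prod_type']
  refine Fintype.sum_equiv (appendTupleEquiv hkm hmn) _ _ fun zw => ?_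
  congr 1 <;> funext i <;> simp only [appendTupleEquiv, Equiv.coe_fn_mk] <;> split_ifs
    <;> first | rfl | omega | exact congrArg _ (Fin.ext (by dsimp only; omega))

theorem ptraceLast_smul {k n : ℕ} (h : k ≤ n) (c : ℂ) (ρ : Matrix (Fin n → ι) (Fin n → ι) ℂ) :
    ptraceLast h (c • ρ) = c • ptraceLast h ρ := by
  ext a b
  simp [ptraceLast, Finset.mul_sum]

theorem ptraceLast_succ_apply {n : ℕ} (ρ : Matrix (Fin (n + 1) → ι) (Fin (n + 1) → ι) ℂ)
    (a b : Fin n → ι) :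
    ptraceLast n.le_succ ρ a b = ∑ c, ρ (Fin.snoc a c) (Fin.snoc b c) := by
  have : Unique (Fin (n + 1 - n)) := ⟨⟨⟨0, by omega⟩⟩, fun j => Fin.ext (by omega)⟩
  refine Fintype.sum_equiv (Equiv.funUnique _ ι) _ _ fun z => ?_
  congr 1 <;> funext i <;> simp only [Fin.snoc, Equiv.funUnique_apply] <;> split_ifs
    <;> first | rfl | exact congrArg z (Subsingleton.elim _ _)

end PartialTrace

theorem sum_sum_ite_cons_apply_eq {ι : Type*} [Fintype ι] [DecidableEq ι] {n : ℕ}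
    (a : Fin n → ι) :
    ∑ c : ι, ∑ p : Fin (n + 1),
      (if (Fin.cons c a : Fin (n + 1) → ι) p = c then (1 : ℂ) else 0) = Fintype.card ι + n := by
  simp only [Fin.sum_univ_succ, Fin.cons_zero, Fin.cons_succ, if_true,
    Finset.sum_add_distrib, Finset.sum_comm (γ := ι)]
  simp

section Symmetric

variable {d : ℕ}

theorem permMat_comp_perm {n : ℕ} (π τ : Equiv.Perm (Fin n)) (f g : Fin n → Fin d) :
    permMat d n π (f ∘ τ) (g ∘ τ) = permMat d n (τ * π * τ⁻¹) f g := by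
  simp only [permMat]
  refine if_congr ⟨fun h => funext fun x => ?_, fun h => funext fun x => ?_⟩ rfl rfl
  · simpa [Equiv.Perm.mul_apply] using congrFun h (τ⁻¹ x)
  · simpa [Equiv.Perm.mul_apply] using congrFun h (τ x)

theorem symProj_comp_perm {n : ℕ} (τ : Equiv.Perm (Fin n)) (f g : Fin n → Fin d) :
    symProj d n (f ∘ τ) (g ∘ τ) = symProj d n f g := by
  simp only [symProj, Matrix.smul_apply, Matrix.sum_apply, permMat_comp_perm]
  congr 1
  exact Equiv.sum_comp (MulAut.conj τ).toEquiv (fun π => permMat d n π f g)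

theorem cons_comp_decomposeFin_symm_eq_iff {n : ℕ} (c : Fin d) (a b : Fin n → Fin d)
    (p : Fin (n + 1)) (σ : Equiv.Perm (Fin n)) :
    (Fin.cons c b : Fin (n + 1) → Fin d) =
        Fin.cons c a ∘ Equiv.Perm.decomposeFin.symm (p, σ) ↔
      (Fin.cons c a : Fin (n + 1) → Fin d) p = c ∧ b = a ∘ σ := by
  have hswap (h : (Fin.cons c a : Fin (n + 1) → Fin d) p = c) (i : Fin n) :
      (Fin.cons c a : Fin (n + 1) → Fin d) (Equiv.swap 0 p (σ i).succ) = a (σ i) := by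
    rw [Equiv.apply_swap_eq_self (v := (Fin.cons c a : Fin (n + 1) → Fin d))
      (by rw [Fin.cons_zero, h]), Fin.cons_succ]
  rw [funext_iff, Fin.forall_fin_succ, funext_iff]
  simp only [Function.comp_apply, Equiv.Perm.decomposeFin_symm_apply_zero,
    Equiv.Perm.decomposeFin_symm_apply_succ, Fin.cons_zero, Fin.cons_succ]
  constructor
  · rintro ⟨h0, hs⟩
    exact ⟨h0.symm, fun i => (hs i).trans (hswap h0.symm i)⟩
  · rintro ⟨h0, hs⟩
    exact ⟨h0.symm, fun i => (hs i).trans (hswap h0 i).symm⟩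

theorem sum_sum_permMat_cons {n : ℕ} (a b : Fin n → Fin d) :
    ∑ c, ∑ π, permMat d (n + 1) π (Fin.cons c a) (Fin.cons c b) =
      (d + n : ℂ) * ∑ σ, permMat d n σ a b := by
  have hsplit (c : Fin d) : ∑ π, permMat d (n + 1) π (Fin.cons c a) (Fin.cons c b) =
      ∑ p : Fin (n + 1), (if (Fin.cons c a : Fin (n + 1) → Fin d) p = c then (1 : ℂ) else 0) *
        ∑ σ, permMat d n σ a b := by
    rw [← Equiv.sum_comp Equiv.Perm.decomposeFin.symm, Fintype.sum_prod_type]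
    simp only [permMat, Finset.mul_sum, cons_comp_decomposeFin_symm_eq_iff, ite_and, ite_mul,
      one_mul, zero_mul]
  simp only [hsplit, ← Finset.sum_mul, sum_sum_ite_cons_apply_eq, Fintype.card_fin]

theorem sum_symProj_cons {n : ℕ} (a b : Fin n → Fin d) :
    ∑ c, symProj d (n + 1) (Fin.cons c a) (Fin.cons c b) =
      ((d + n : ℂ) / (n + 1)) * symProj d n a b := by
  simp only [symProj, Matrix.smul_apply, Matrix.sum_apply, smul_eq_mul, ← Finset.mul_sum,
    sum_sum_permMat_cons, Nat.factorial_succ, Nat.cast_mul]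
  field_simp
  push_cast
  ring

theorem ptraceLast_symProj_succ (n : ℕ) :
    ptraceLast n.le_succ (symProj d (n + 1)) = ((d + n : ℂ) / (n + 1)) • symProj d n := by
  ext a b
  rw [ptraceLast_succ_apply, Matrix.smul_apply, smul_eq_mul, ← sum_symProj_cons]
  refine Fintype.sum_congr _ _ fun c => ?_
  simp only [Fin.snoc_eq_cons_rotate]
  exact symProj_comp_perm (finRotate (n + 1)) _ _

theorem succ_mul_dsym_succ (n : ℕ) : (n + 1) * dsym d (n + 1) = (d + n) * dsym d n := by
  rcases d with _ | d
  · rcases n with _ | n <;> simp [dsym]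
  · simp only [dsym, show d + 1 + (n + 1) - 1 = d + n + 1 by omega,
      show d + 1 + n - 1 = d + n by omega]
    rw [mul_comm, ← Nat.add_one_mul_choose_eq]
    ring

theorem dsym_pos (hd : 1 ≤ d) (n : ℕ) : 0 < dsym d n :=
  Nat.choose_pos (by omega)

theorem ptraceLast_piSym_succ (hd : 1 ≤ d) (n : ℕ) :
    ptraceLast n.le_succ (piSym d (n + 1)) = piSym d n := by
  have hdsym : ((n : ℂ) + 1) * dsym d (n + 1) = (d + n) * dsym d n := by
    exact_mod_cast succ_mul_dsym_succ n
  have h0 : (dsym d (n + 1) : ℂ) ≠ 0 := by exact_mod_cast (dsym_pos hd (n + 1)).ne'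
  have h1 : (dsym d n : ℂ) ≠ 0 := by exact_mod_cast (dsym_pos hd n).ne'
  rw [piSym, piSym, ptraceLast_smul, ptraceLast_symProj_succ, smul_smul]
  congr 1
  field_simp
  rw [← hdsym]
  ring

end Symmetric

theorem ptrace_piSym_general
    (d k n : ℕ) (hd : 1 ≤ d) (hkn : k ≤ n) :
    ptraceLast hkn (piSym d n) = piSym d k := by
  induction n, hkn using Nat.le_induction with
  | base => exact ptraceLast_self _
  | succ n hkn ih => rw [← ptraceLast_ptraceLast hkn n.le_succ, ptraceLast_piSym_succ hd, ih]

/-- The partial trace of the maximally mixed state on the symmetric subspace of `n` qudits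
is the maximally mixed state on the symmetric subspace of `k` qudits. -/
theorem ptrace_piSym
    (d k n : ℕ) (hd : 1 ≤ d) (hk : 1 ≤ k) (hkn : k ≤ n) :
    ptraceLast hkn (piSym d n) = piSym d k :=
  ptrace_piSym_general d k n hd hkn
end

section
/- Let d ≥ 1, 1 ≤ k ≤ n, and let φ be a pure state (rank-one projection onto a unit vector) on ℂ^d. Then D(φ^{⊗n}‖C_{k→n}(φ^{⊗k})) ≤ log(d[n]/d[k]). -/
open scoped BigOperators Matrix Kronecker ComplexOrder
open Matrix

/-!
The unit vector `u^{⊗n}` is an eigenvector of `C_{k→n}(φ^{⊗k})` with eigenvalue `d[k]/d[n]`: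
both symmetric projections fix it, being permutation invariant, and `|u^{⊗k}⟩⟨u^{⊗k}| ⊗ I`
fixes it, being a product vector. For a pure state `ρ = |v⟩⟨v|` and a Hermitian `σ` with
`σ v = λ v`, the logarithms of `ρ` and `σ` act on `v` as the scalars `log 1 = 0` and `log λ`,
so `D(ρ‖σ) = -log λ`. The bound therefore holds with equality.
-/
section PureState

variable {ι : Type*} [Fintype ι] [DecidableEq ι]

lemma hermFun_mulVec_of_mulVec_eq_smul (f : ℝ → ℂ) {A : Matrix ι ι ℂ} (hA : A.IsHermitian)
    {c : ℝ} {v : ι → ℂ} (hv : A *ᵥ v = (c : ℂ) • v) : hermFun f A *ᵥ v = f c • v := by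
  set U : Matrix ι ι ℂ := (hA.eigenvectorUnitary : Matrix ι ι ℂ)
  have hUU : U * star U = 1 := Unitary.mul_star_self_of_mem hA.eigenvectorUnitary.2
  set w := star U *ᵥ v
  have hdiag : diagonal (RCLike.ofReal ∘ hA.eigenvalues) *ᵥ w = (c : ℂ) • w := by
    rw [← hA.conjStarAlgAut_star_eigenvectorUnitary, Unitary.conjStarAlgAut_star_apply,
      mulVec_mulVec, Matrix.mul_assoc, hUU, Matrix.mul_one, ← mulVec_mulVec, hv, mulVec_smul]
  have hw : ∀ i, hA.eigenvalues i ≠ c → w i = 0 := by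
    intro i hi
    have hi' : ((hA.eigenvalues i : ℝ) : ℂ) ≠ c := by exact_mod_cast hi
    have := congrFun hdiag i
    simp only [mulVec_diagonal, Function.comp_apply, Pi.smul_apply, smul_eq_mul] at this
    exact (mul_eq_mul_right_iff.mp this).resolve_left hi'
  have hfdiag : diagonal (fun i => f (hA.eigenvalues i)) *ᵥ w = f c • w := by
    ext i
    by_cases hi : hA.eigenvalues i = c <;> simp [mulVec_diagonal, hi, hw]
  rw [hermFun, dif_pos hA, ← mulVec_mulVec, ← mulVec_mulVec, hfdiag, mulVec_smul, mulVec_mulVec,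
    hUU, one_mulVec]

lemma outer_eq_vecMulVec {α : Type*} (v : α → ℂ) : outer v = vecMulVec v (star v) := rfl

lemma isHermitian_outer {α : Type*} (v : α → ℂ) : (outer v).IsHermitian := by
  rw [outer_eq_vecMulVec, IsHermitian, conjTranspose_vecMulVec, star_star]

lemma outer_mulVec {α : Type*} [Fintype α] (v w : α → ℂ) : outer v *ᵥ w = (star v ⬝ᵥ w) • v := by
  rw [outer_eq_vecMulVec, vecMulVec_mulVec, op_smul_eq_smul]

lemma trace_outer_mul {α : Type*} [Fintype α] (v : α → ℂ) (B : Matrix α α ℂ) :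
    (outer v * B).trace = star v ⬝ᵥ (B *ᵥ v) := by
  rw [trace_mul_comm, outer_eq_vecMulVec, mul_vecMulVec, trace_vecMulVec, dotProduct_comm]

lemma relEnt_outer_of_mulVec_eq_smul {v : ι → ℂ} (hv : star v ⬝ᵥ v = 1)
    {σ : Matrix ι ι ℂ} (hσ : σ.IsHermitian) {c : ℝ} (hσv : σ *ᵥ v = (c : ℂ) • v) :
    relEnt (outer v) σ = -Real.log c := by
  have hρv : outer v *ᵥ v = ((1 : ℝ) : ℂ) • v := by rw [outer_mulVec, hv, Complex.ofReal_one]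
  have hlog : (matLog (outer v) - matLog σ) *ᵥ v = (-Real.log c : ℂ) • v := by
    rw [sub_mulVec, matLog, matLog, hermFun_mulVec_of_mulVec_eq_smul _ (isHermitian_outer v) hρv,
      hermFun_mulVec_of_mulVec_eq_smul _ hσ hσv, Real.log_one, Complex.ofReal_zero, zero_smul,
      zero_sub, neg_smul]
  rw [relEnt, trace_outer_mul, hlog, dotProduct_smul, hv, smul_eq_mul, mul_one]
  simp

end PureState

section TensorPower

variable {α : Type*}

def tpowVec (u : α → ℂ) (m : ℕ) : (Fin m → α) → ℂ := fun f => ∏ i, u (f i)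

lemma tpow_outer (u : α → ℂ) (m : ℕ) : tpow (outer u) m = outer (tpowVec u m) := by
  ext f g
  simp [tpow, outer, tpowVec, Finset.prod_mul_distrib, map_prod]

lemma star_tpowVec_dotProduct_tpowVec [Fintype α] (u : α → ℂ) (m : ℕ) :
    star (tpowVec u m) ⬝ᵥ tpowVec u m = (star u ⬝ᵥ u) ^ m := by
  simp only [dotProduct, tpowVec, Pi.star_apply, star_prod, ← Finset.prod_mul_distrib]
  exact (Fintype.sum_pow (fun a => star (u a) * u a) m).symm

lemma tpowVec_comp_perm (u : α → ℂ) {m : ℕ} (π : Equiv.Perm (Fin m)) (f : Fin m → α) :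
    tpowVec u m (f ∘ π) = tpowVec u m f :=
  Equiv.prod_comp π (fun i => u (f i))

end TensorPower

section SymmetricSubspace

variable {d m : ℕ}

lemma permMat_mulVec (π : Equiv.Perm (Fin m)) (w : (Fin m → Fin d) → ℂ) :
    permMat d m π *ᵥ w = fun f => w (f ∘ π) := by
  ext f
  simp [permMat, mulVec, dotProduct]

lemma conjTranspose_permMat (π : Equiv.Perm (Fin m)) :
    (permMat d m π)ᴴ = permMat d m π⁻¹ := by
  ext f g
  simp only [conjTranspose_apply, permMat, Equiv.Perm.inv_def, Equiv.eq_comp_symm,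
    eq_comm (a := f)]
  split_ifs <;> simp

lemma isHermitian_symProj : (symProj d m).IsHermitian := by
  rw [IsHermitian, symProj, conjTranspose_smul, conjTranspose_sum]
  simp_rw [conjTranspose_permMat]
  rw [star_inv₀, star_natCast]
  congr 1
  exact Equiv.sum_comp (Equiv.inv _) (permMat d m)

lemma Matrix.IsHermitian.symProj_mul_mul {X : Matrix (Fin m → Fin d) (Fin m → Fin d) ℂ}
    (hX : X.IsHermitian) : (symProj d m * X * symProj d m).IsHermitian := by
  simpa only [isHermitian_symProj.eq] using isHermitian_conjTranspose_mul_mul (symProj d m) hX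

lemma symProj_mulVec_of_forall_comp_perm {w : (Fin m → Fin d) → ℂ}
    (hw : ∀ (π : Equiv.Perm (Fin m)) f, w (f ∘ π) = w f) : symProj d m *ᵥ w = w := by
  have hperm : ∀ π, permMat d m π *ᵥ w = w := fun π => by
    rw [permMat_mulVec]; exact funext (hw π)
  rw [symProj, smul_mulVec, sum_mulVec, Finset.sum_congr rfl fun π _ => hperm π,
    Finset.sum_const, Finset.card_univ, Fintype.card_perm, Fintype.card_fin,
    ← Nat.cast_smul_eq_nsmul ℂ, smul_smul,
    inv_mul_cancel₀ (Nat.cast_ne_zero.mpr (Nat.factorial_ne_zero m)), one_smul]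

lemma symProj_mulVec_tpowVec (u : Fin d → ℂ) : symProj d m *ᵥ tpowVec u m = tpowVec u m :=
  symProj_mulVec_of_forall_comp_perm (tpowVec_comp_perm u)

end SymmetricSubspace

section ExtendId

variable {k n : ℕ}

def replaceInit {α : Type*} (b : Fin k → α) (f : Fin n → α) : Fin n → α :=
  fun i => if hi : (i : ℕ) < k then b ⟨i, hi⟩ else f i

lemma replaceInit_castLE {α : Type*} (h : k ≤ n) (b : Fin k → α) (f : Fin n → α) (j : Fin k) :
    replaceInit b f (Fin.castLE h j) = b j := by
  simp [replaceInit]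

lemma replaceInit_comp_castLE_eq_iff {α : Type*} (h : k ≤ n) (f g : Fin n → α) :
    replaceInit (fun j => g (Fin.castLE h j)) f = g ↔ ∀ i : Fin n, k ≤ (i : ℕ) → f i = g i := by
  refine ⟨fun hg i hi => ?_, fun hfg => funext fun i => ?_⟩
  · rw [← hg, replaceInit, dif_neg (Nat.not_lt.mpr hi)]
  · unfold replaceInit
    split_ifs with hi
    · rfl
    · exact hfg i (Nat.le_of_not_lt hi)

variable {d : ℕ}

lemma conjTranspose_extendId (h : k ≤ n) (M : Matrix (Fin k → Fin d) (Fin k → Fin d) ℂ) :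
    (extendId h M)ᴴ = extendId h Mᴴ := by
  ext f g
  simp only [conjTranspose_apply, extendId, star_mul', eq_comm (a := g _)]
  split_ifs <;> simp

lemma extendId_mulVec_apply (h : k ≤ n) (M : Matrix (Fin k → Fin d) (Fin k → Fin d) ℂ)
    (w : (Fin n → Fin d) → ℂ) (f : Fin n → Fin d) :
    (extendId h M *ᵥ w) f = ∑ b, M (fun j => f (Fin.castLE h j)) b * w (replaceInit b f) := by
  simp only [mulVec, dotProduct, extendId, ite_mul, one_mul, zero_mul, Finset.sum_ite,
    Finset.sum_const_zero, add_zero]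
  refine Finset.sum_nbij' (fun g j => g (Fin.castLE h j)) (fun b => replaceInit b f) ?_ ?_ ?_ ?_ ?_
  · simp
  · intro b _
    refine Finset.mem_filter.mpr ⟨Finset.mem_univ _, fun i hi => ?_⟩
    rw [replaceInit, dif_neg (Nat.not_lt.mpr hi)]
  · intro g hg
    exact (replaceInit_comp_castLE_eq_iff h f g).mpr (by simpa using hg)
  · intro b _
    exact funext (replaceInit_castLE h b f)
  · intro g hg
    rw [(replaceInit_comp_castLE_eq_iff h f g).mpr (by simpa using hg)]

lemma tpowVec_replaceInit (u : Fin d → ℂ) (h : k ≤ n) (b : Fin k → Fin d) (f : Fin n → Fin d) :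
    tpowVec u n (replaceInit b f) =
      tpowVec u k b * ∏ i : {i : Fin n // ¬ (i : ℕ) < k}, u (f i) := by
  rw [tpowVec, ← Fintype.prod_subtype_mul_prod_subtype (fun i : Fin n => (i : ℕ) < k)]
  congr 1
  · rw [← (Fin.castLEquiv h).prod_comp]
    simp only [Fin.castLEquiv_apply, replaceInit_castLE]
    rfl
  · refine Finset.prod_congr rfl fun i _ => ?_
    rw [replaceInit, dif_neg i.2]

lemma extendId_mulVec_tpowVec (u : Fin d → ℂ) (h : k ≤ n)
    {M : Matrix (Fin k → Fin d) (Fin k → Fin d) ℂ} (hM : M *ᵥ tpowVec u k = tpowVec u k) :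
    extendId h M *ᵥ tpowVec u n = tpowVec u n := by
  funext f
  have hf : replaceInit (fun j => f (Fin.castLE h j)) f = f :=
    (replaceInit_comp_castLE_eq_iff h f f).mpr fun _ _ => rfl
  rw [extendId_mulVec_apply]
  simp_rw [tpowVec_replaceInit u h, ← mul_assoc]
  rw [← Finset.sum_mul]
  conv_rhs => rw [← hf, tpowVec_replaceInit u h, ← hM]
  rfl

end ExtendId

section Cloning

variable {d k n : ℕ}

lemma isHermitian_uqcm (h : k ≤ n) {ω : Matrix (Fin k → Fin d) (Fin k → Fin d) ℂ}
    (hω : ω.IsHermitian) : (uqcm d h ω).IsHermitian := by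
  have hext : (extendId h (symProj d k * ω * symProj d k)).IsHermitian := by
    rw [IsHermitian, conjTranspose_extendId, hω.symProj_mul_mul.eq]
  exact hext.symProj_mul_mul.smul ((IsSelfAdjoint.natCast _).div (IsSelfAdjoint.natCast _))

lemma uqcm_tpow_outer_mulVec (h : k ≤ n) {u : Fin d → ℂ} (hu : star u ⬝ᵥ u = 1) :
    uqcm d h (tpow (outer u) k) *ᵥ tpowVec u n =
      ((dsym d k / dsym d n : ℝ) : ℂ) • tpowVec u n := by
  have hω : tpow (outer u) k *ᵥ tpowVec u k = tpowVec u k := by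
    rw [tpow_outer, outer_mulVec, star_tpowVec_dotProduct_tpowVec, hu, one_pow, one_smul]
  have hsandwich :
      (symProj d k * tpow (outer u) k * symProj d k) *ᵥ tpowVec u k = tpowVec u k := by
    rw [← mulVec_mulVec, ← mulVec_mulVec, symProj_mulVec_tpowVec, hω, symProj_mulVec_tpowVec]
  rw [uqcm, smul_mulVec, ← mulVec_mulVec, ← mulVec_mulVec, symProj_mulVec_tpowVec,
    extendId_mulVec_tpowVec u h hsandwich, symProj_mulVec_tpowVec]
  push_cast
  rfl

lemma relEnt_uqcm_tpow_outer (h : k ≤ n) {u : Fin d → ℂ} (hu : star u ⬝ᵥ u = 1) :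
    relEnt (tpow (outer u) n) (uqcm d h (tpow (outer u) k)) =
      Real.log ((dsym d n : ℝ) / (dsym d k : ℝ)) := by
  have hunit : star (tpowVec u n) ⬝ᵥ tpowVec u n = 1 := by
    rw [star_tpowVec_dotProduct_tpowVec, hu, one_pow]
  have hσ : (uqcm d h (tpow (outer u) k)).IsHermitian :=
    isHermitian_uqcm h (tpow_outer u k ▸ isHermitian_outer _)
  rw [tpow_outer u n, relEnt_outer_of_mulVec_eq_smul hunit hσ (uqcm_tpow_outer_mulVec h hu),
    ← Real.log_inv, inv_div]

end Cloning

theorem relEnt_uqcm_pure_state_le_general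
    (d k n : ℕ) (hkn : k ≤ n)
    (u : Fin d → ℂ) (hu : ∑ a, Complex.normSq (u a) = 1) :
    relEnt (tpow (outer u) n) (uqcm d hkn (tpow (outer u) k)) ≤
      Real.log ((dsym d n : ℝ) / (dsym d k : ℝ)) := by
  have hu' : star u ⬝ᵥ u = 1 := by
    simpa [dotProduct, Complex.normSq_eq_conj_mul_self] using congrArg ((↑) : ℝ → ℂ) hu
  exact (relEnt_uqcm_tpow_outer hkn hu').le

/-- Relative entropy bound for `k → n` universal cloning of a pure tensor-power state:
`D(φ^{⊗n} ‖ C_{k→n}(φ^{⊗k})) ≤ log(d[n]/d[k])`. -/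
theorem relEnt_uqcm_pure_state_le
    (d k n : ℕ) (hd : 1 ≤ d) (hk : 1 ≤ k) (hkn : k ≤ n)
    (u : Fin d → ℂ) (hu : ∑ a, Complex.normSq (u a) = 1) :
    relEnt (tpow (outer u) n) (uqcm d hkn (tpow (outer u) k)) ≤
      Real.log ((dsym d n : ℝ) / (dsym d k : ℝ)) :=
  relEnt_uqcm_pure_state_le_general d k n hkn u hu
end

section
/- Let 1 ≤ k ≤ n ≤ d, and let π_n and π_k denote the maximally mixed states on the antisymmetric subspaces of (ℂ^d)^{⊗n} and (ℂ^d)^{⊗k} respectively. Then the partial trace over the last n−k tensor factors satisfies tr_{n→k}[π_n] = π_k. -/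
open scoped BigOperators Matrix Kronecker ComplexOrder
open Matrix

/-!
Entrywise, `piAnti d n f g` is `(d)ₙ⁻¹` times the signed number of permutations `σ` with
`g = f ∘ σ`, where `(d)ₙ = d!/(d-n)!` is the falling factorial. Splitting an `n`-qudit index as
`(a, z)` with `a` on the first `k` factors, the signed count for `(a, z), (b, z)` equals the one
for `a, b` when `(a, z)` is injective and vanishes otherwise, while an injective `a` has exactly
`(d-k)ₙ₋ₖ` injective extensions `z`. Tracing out `z` thus multiplies by `(d-k)ₙ₋ₖ`, and
`(d)ₙ = (d-k)ₙ₋ₖ · (d)ₖ`.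
-/

open Function

namespace Equiv.Perm

theorem exists_perm_of_sumElim_eq_comp {α β γ : Type*} [Finite α] {a b : α → β} {z : γ → β}
    (h : Injective (Sum.elim a z)) {π : Perm (α ⊕ γ)}
    (hπ : Sum.elim b z = Sum.elim a z ∘ π) : ∃ σ : Perm α, b = a ∘ σ := by
  have hB : Injective (Sum.elim b z) := hπ ▸ h.comp π.injective
  have hrange : ∀ i, ∃ j, a j = b i := fun i => by
    have hi := congrFun hπ (Sum.inl i)
    rcases hπi : π (Sum.inl i) with j | j
    · exact ⟨j, by simp_all⟩
    · exact absurd (hB (a₁ := Sum.inl i) (a₂ := Sum.inr j) (by simp_all)) Sum.inl_ne_inr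
  choose σ hσ using hrange
  have hσ_inj : Injective σ := fun i i' h =>
    (Sum.elim_injective.mp hB).1 (by rw [← hσ, ← hσ, h])
  exact ⟨Equiv.ofBijective σ hσ_inj.bijective_of_finite, funext fun i => (hσ i).symm⟩

section SignedCount

variable {α β : Type*} [Fintype α] [DecidableEq α] [DecidableEq β]

def signedCount (f g : α → β) : ℤ :=
  ∑ σ : Perm α, if g = f ∘ σ then (sign σ : ℤ) else 0

theorem signedCount_of_not_injective {f : α → β} (hf : ¬Injective f) (g : α → β) :
    signedCount f g = 0 := by
  obtain ⟨i, j, hfij, hij⟩ : ∃ i j, f i = f j ∧ i ≠ j := by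
    simpa [Injective] using hf
  have hswap : f ∘ swap i j = f := funext fun x => by
    rcases eq_or_ne x i with rfl | hxi
    · simp [hfij]
    rcases eq_or_ne x j with rfl | hxj
    · simp [hfij]
    · simp [swap_apply_of_ne_of_ne hxi hxj]
  -- left multiplication by the transposition `(i j)` fixes `f ∘ σ` and flips the sign
  have hneg : signedCount f g = -signedCount f g := by
    conv_lhs => rw [signedCount, ← Equiv.sum_comp (Equiv.mulLeft (swap i j))]
    simp only [signedCount, ← Finset.sum_neg_distrib]
    refine Finset.sum_congr rfl fun σ _ => ?_
    have hcomp : f ∘ ⇑(swap i j * σ) = f ∘ σ := by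
      rw [coe_mul, ← Function.comp_assoc, hswap]
    simp only [coe_mulLeft, hcomp, sign_mul, sign_swap hij]
    split_ifs <;> simp
  omega

theorem signedCount_of_injective {f : α → β} (hf : Injective f) (σ : Perm α) :
    signedCount f (f ∘ σ) = sign σ := by
  have hiff : ∀ τ : Perm α, f ∘ σ = f ∘ τ ↔ σ = τ := fun τ =>
    ⟨fun h => Equiv.ext fun x => hf (congrFun h x), fun h => h ▸ rfl⟩
  simp only [signedCount, hiff, Finset.sum_ite_eq, Finset.mem_univ, if_true]

theorem signedCount_eq_zero_of_forall_ne {f g : α → β} (h : ∀ σ : Perm α, g ≠ f ∘ σ) :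
    signedCount f g = 0 :=
  Finset.sum_eq_zero fun σ _ => if_neg (h σ)

theorem signedCount_comp_equiv {γ : Type*} [Fintype γ] [DecidableEq γ] (e : γ ≃ α)
    (f g : α → β) : signedCount (f ∘ e) (g ∘ e) = signedCount f g := by
  rw [signedCount, ← Equiv.sum_comp (permCongr e.symm)]
  refine Finset.sum_congr rfl fun σ _ => ?_
  have hcomp : (f ∘ e) ∘ ⇑(permCongr e.symm σ) = (f ∘ σ) ∘ e := by
    ext x; simp [permCongr_apply]
  simp only [hcomp, e.surjective.injective_comp_right.eq_iff, sign_permCongr]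

variable {γ : Type*} [Fintype γ] [DecidableEq γ]

theorem signedCount_sumElim (a b : α → β) (z : γ → β) :
    signedCount (Sum.elim a z) (Sum.elim b z) =
      if Injective (Sum.elim a z) then signedCount a b else 0 := by
  split_ifs with h
  · by_cases hb : ∃ σ : Perm α, b = a ∘ σ
    · obtain ⟨σ, rfl⟩ := hb
      have hcomp : Sum.elim (a ∘ σ) z = Sum.elim a z ∘ sumCongr σ 1 := by
        ext (x | x) <;> rfl
      rw [hcomp, signedCount_of_injective h, signedCount_of_injective (Sum.elim_injective.mp h).1,
        sign_sumCongr, sign_one, mul_one]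
    · push Not at hb
      rw [signedCount_eq_zero_of_forall_ne hb, signedCount_eq_zero_of_forall_ne]
      intro π hπ
      obtain ⟨σ, hσ⟩ := exists_perm_of_sumElim_eq_comp h hπ
      exact hb σ hσ
  · exact signedCount_of_not_injective h _

end SignedCount

end Equiv.Perm

theorem Function.Injective.card_injective_sumElim {α β γ : Type*} [Fintype α] [Fintype β]
    [Fintype γ] {a : α → β} (ha : Injective a) :
    Nat.card {z : γ → β // Injective (Sum.elim a z)} =
      (Fintype.card β - Fintype.card α).descFactorial (Fintype.card γ) := by
  classical
  let e : {z : γ → β // Injective (Sum.elim a z)} ≃ (γ ↪ ↥(Set.range a)ᶜ) :=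
    { toFun := fun z => ⟨fun c => ⟨z.1 c, fun ⟨i, hi⟩ => (Sum.elim_injective.mp z.2).2.2 i c hi⟩,
        fun c c' h => (Sum.elim_injective.mp z.2).2.1 (congrArg Subtype.val h)⟩
      invFun := fun f => ⟨Subtype.val ∘ f, Sum.elim_injective.mpr
        ⟨ha, Subtype.val_injective.comp f.injective, fun i c h => (f c).2 ⟨i, h⟩⟩⟩
      left_inv := fun z => rfl
      right_inv := fun f => rfl }
  rw [Nat.card_congr e, Nat.card_eq_fintype_card, Fintype.card_embedding_eq,
    Fintype.card_compl_set, Set.card_range_of_injective ha]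

theorem Equiv.Perm.sum_signedCount_sumElim {α β γ : Type*} [Fintype α] [DecidableEq α]
    [Fintype β] [DecidableEq β] [Fintype γ] [DecidableEq γ] (a b : α → β) :
    ∑ z : γ → β, signedCount (Sum.elim a z) (Sum.elim b z) =
      (Fintype.card β - Fintype.card α).descFactorial (Fintype.card γ) * signedCount a b := by
  by_cases ha : Injective a
  · simp only [signedCount_sumElim]
    rw [Finset.sum_ite, Finset.sum_const_zero, add_zero, Finset.sum_const, nsmul_eq_mul,
      ← ha.card_injective_sumElim (γ := γ), Nat.card_eq_fintype_card, Fintype.card_subtype]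
  · have hz : ∀ z : γ → β, ¬Injective (Sum.elim a z) := fun z h => ha (Sum.elim_injective.mp h).1
    simp [signedCount_of_not_injective, hz, ha]

def finSumFinSubEquiv {k n : ℕ} (h : k ≤ n) : Fin n ≃ Fin k ⊕ Fin (n - k) :=
  (finCongr (Nat.add_sub_cancel' h).symm).trans finSumFinEquiv.symm

theorem sumElim_comp_finSumFinSubEquiv {β : Type*} {k n : ℕ} (h : k ≤ n) (a : Fin k → β)
    (z : Fin (n - k) → β) :
    Sum.elim a z ∘ finSumFinSubEquiv h = fun i : Fin n =>
      if h' : (i : ℕ) < k then a ⟨i, h'⟩ else z ⟨(i : ℕ) - k, by have := i.isLt; omega⟩ := by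
  funext i
  by_cases hi : (i : ℕ) < k
  · have hcast : finCongr (Nat.add_sub_cancel' h).symm i = Fin.castAdd (n - k) ⟨i, hi⟩ := rfl
    simp only [finSumFinSubEquiv, Function.comp_apply, Equiv.trans_apply, hcast,
      finSumFinEquiv_symm_apply_castAdd, Sum.elim_inl, dif_pos hi]
  · have hcast : finCongr (Nat.add_sub_cancel' h).symm i = Fin.natAdd k ⟨i - k, by omega⟩ :=
      Fin.ext (by simp only [finCongr_apply, Fin.val_cast, Fin.natAdd_mk]; omega)
    simp only [finSumFinSubEquiv, Function.comp_apply, Equiv.trans_apply, hcast,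
      finSumFinEquiv_symm_apply_natAdd, Sum.elim_inr, dif_neg hi]

theorem ptraceLast_apply {ι : Type*} [Fintype ι] {k n : ℕ} (h : k ≤ n)
    (ρ : Matrix (Fin n → ι) (Fin n → ι) ℂ) (a b : Fin k → ι) :
    ptraceLast h ρ a b = ∑ z : Fin (n - k) → ι,
      ρ (Sum.elim a z ∘ finSumFinSubEquiv h) (Sum.elim b z ∘ finSumFinSubEquiv h) := by
  simp only [sumElim_comp_finSumFinSubEquiv]
  rfl

theorem piAnti_apply (d n : ℕ) (f g : Fin n → Fin d) :
    piAnti d n f g = ((d.descFactorial n : ℂ))⁻¹ * Equiv.Perm.signedCount f g := by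
  simp only [piAnti, antiProj, Matrix.smul_apply, Matrix.sum_apply, permMat, smul_eq_mul,
    mul_ite, mul_one, mul_zero, Equiv.Perm.signedCount, Int.cast_sum, Int.cast_ite, Int.cast_zero,
    Nat.descFactorial_eq_factorial_mul_choose, Nat.cast_mul, _root_.mul_inv_rev, Finset.mul_sum,
    mul_assoc]

theorem ptrace_piAnti_general
    (d k n : ℕ) (hkn : k ≤ n) (hnd : n ≤ d) :
    ptraceLast hkn (piAnti d n) = piAnti d k := by
  funext a b
  have hdesc : d.descFactorial n = (d - k).descFactorial (n - k) * d.descFactorial k :=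
    (Nat.descFactorial_mul_descFactorial hkn).symm
  have hpos : ((d - k).descFactorial (n - k) : ℂ) ≠ 0 :=
    Nat.cast_ne_zero.mpr (Nat.descFactorial_pos.mpr (by omega)).ne'
  simp only [ptraceLast_apply, piAnti_apply, Equiv.Perm.signedCount_comp_equiv]
  rw [← Finset.mul_sum, ← Int.cast_sum, Equiv.Perm.sum_signedCount_sumElim]
  simp only [Fintype.card_fin, hdesc]
  push_cast
  field_simp

/-- The partial trace of the maximally mixed state on the antisymmetric subspace of `n`
qudits is the maximally mixed state on the antisymmetric subspace of `k` qudits. -/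
theorem ptrace_piAnti
    (d k n : ℕ) (hk : 1 ≤ k) (hkn : k ≤ n) (hnd : n ≤ d) :
    ptraceLast hkn (piAnti d n) = piAnti d k :=
  ptrace_piAnti_general d k n hkn hnd
end
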